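/- arXiv:2302.02625 — 8 statements merged into one kernel-verified Lean document; each statement's English description precedes it below -/
import Mathlib

section
/- Let t > 0, y > 0 and let n₁, n₂, n₃, n₄ be positive real numbers with n₁ + n₂ = n₃ + n₄ and 2πnⱼy < t for j = 1,2,3,4; set hⱼ = √(t² − (2πnⱼy)²). Then |h₁ + h₂ − h₃ − h₄| ≥ 4·(2πy)²·|n₁n₂ − n₃n₄|·t² / ((h₁h₂ + h₃h₄)·(h₁ + h₂ + h₃ + h₄)). -/
open Real

private lemma pos_sub_sq {t a : ℝ} (h0 : 0 < a) (h1 : a < t) : 0 < t ^ 2 - a ^ 2 := by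
  have h := mul_pos (by linarith : (0:ℝ) < t - a) (by linarith : (0:ℝ) < t + a)
  have e : (t - a) * (t + a) = t ^ 2 - a ^ 2 := by ring
  linarith

/-- Lower bound for `|h₁ + h₂ - h₃ - h₄|` in terms of `|n₁n₂ - n₃n₄|`. -/
theorem h_diff_lower_bound
    (t y n₁ n₂ n₃ n₄ h₁ h₂ h₃ h₄ : ℝ)
    (ht : 0 < t) (hy : 0 < y)
    (hn₁ : 0 < n₁) (hn₂ : 0 < n₂) (hn₃ : 0 < n₃) (hn₄ : 0 < n₄)
    (hsum : n₁ + n₂ = n₃ + n₄)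
    (hlt₁ : 2 * π * n₁ * y < t) (hlt₂ : 2 * π * n₂ * y < t)
    (hlt₃ : 2 * π * n₃ * y < t) (hlt₄ : 2 * π * n₄ * y < t)
    (hh₁ : h₁ = Real.sqrt (t ^ 2 - (2 * π * n₁ * y) ^ 2))
    (hh₂ : h₂ = Real.sqrt (t ^ 2 - (2 * π * n₂ * y) ^ 2))
    (hh₃ : h₃ = Real.sqrt (t ^ 2 - (2 * π * n₃ * y) ^ 2))
    (hh₄ : h₄ = Real.sqrt (t ^ 2 - (2 * π * n₄ * y) ^ 2)) :
    |h₁ + h₂ - h₃ - h₄| ≥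
      4 * (2 * π * y) ^ 2 * |n₁ * n₂ - n₃ * n₄| * t ^ 2 /
        ((h₁ * h₂ + h₃ * h₄) * (h₁ + h₂ + h₃ + h₄)) := by
  have hπ := Real.pi_pos
  obtain ⟨a₁, ha₁⟩ : ∃ a, 2 * π * n₁ * y = a := ⟨_, rfl⟩
  obtain ⟨a₂, ha₂⟩ : ∃ a, 2 * π * n₂ * y = a := ⟨_, rfl⟩
  obtain ⟨a₃, ha₃⟩ : ∃ a, 2 * π * n₃ * y = a := ⟨_, rfl⟩
  obtain ⟨a₄, ha₄⟩ : ∃ a, 2 * π * n₄ * y = a := ⟨_, rfl⟩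
  rw [ha₁] at hlt₁ hh₁
  rw [ha₂] at hlt₂ hh₂
  rw [ha₃] at hlt₃ hh₃
  rw [ha₄] at hlt₄ hh₄
  have hpa₁ : 0 < a₁ := by rw [← ha₁]; positivity
  have hpa₂ : 0 < a₂ := by rw [← ha₂]; positivity
  have hpa₃ : 0 < a₃ := by rw [← ha₃]; positivity
  have hpa₄ : 0 < a₄ := by rw [← ha₄]; positivity
  have e₁ : h₁ ^ 2 = t ^ 2 - a₁ ^ 2 := by rw [hh₁, Real.sq_sqrt (pos_sub_sq hpa₁ hlt₁).le]
  have e₂ : h₂ ^ 2 = t ^ 2 - a₂ ^ 2 := by rw [hh₂, Real.sq_sqrt (pos_sub_sq hpa₂ hlt₂).le]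
  have e₃ : h₃ ^ 2 = t ^ 2 - a₃ ^ 2 := by rw [hh₃, Real.sq_sqrt (pos_sub_sq hpa₃ hlt₃).le]
  have e₄ : h₄ ^ 2 = t ^ 2 - a₄ ^ 2 := by rw [hh₄, Real.sq_sqrt (pos_sub_sq hpa₄ hlt₄).le]
  have hp₁ : 0 < h₁ := by rw [hh₁]; exact Real.sqrt_pos.mpr (pos_sub_sq hpa₁ hlt₁)
  have hp₂ : 0 < h₂ := by rw [hh₂]; exact Real.sqrt_pos.mpr (pos_sub_sq hpa₂ hlt₂)
  have hp₃ : 0 < h₃ := by rw [hh₃]; exact Real.sqrt_pos.mpr (pos_sub_sq hpa₃ hlt₃)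
  have hp₄ : 0 < h₄ := by rw [hh₄]; exact Real.sqrt_pos.mpr (pos_sub_sq hpa₄ hlt₄)
  have hsum' : a₁ + a₂ = a₃ + a₄ := by
    rw [← ha₁, ← ha₂, ← ha₃, ← ha₄]; linear_combination (2 * π * y) * hsum
  have hA : h₁ ^ 2 + h₂ ^ 2 - h₃ ^ 2 - h₄ ^ 2 = 2 * (a₁ * a₂ - a₃ * a₄) := by
    linear_combination e₁ + e₂ - e₃ - e₄ - (a₁ + a₂ + a₃ + a₄) * hsum'
  have hAa : a₃ ^ 2 + a₄ ^ 2 - a₁ ^ 2 - a₂ ^ 2 = 2 * (a₁ * a₂ - a₃ * a₄) := by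
    linear_combination -(a₁ + a₂ + a₃ + a₄) * hsum'
  have hB : (h₁ * h₂) ^ 2 - (h₃ * h₄) ^ 2 =
      (a₁ * a₂ - a₃ * a₄) * (2 * t ^ 2 + a₁ * a₂ + a₃ * a₄) := by
    linear_combination h₂ ^ 2 * e₁ + (t ^ 2 - a₁ ^ 2) * e₂ - h₄ ^ 2 * e₃ -
      (t ^ 2 - a₃ ^ 2) * e₄ + t ^ 2 * hAa
  obtain ⟨P, hP⟩ : ∃ p, h₁ * h₂ + h₃ * h₄ = p := ⟨_, rfl⟩
  obtain ⟨S, hS⟩ : ∃ s, h₁ + h₂ + h₃ + h₄ = s := ⟨_, rfl⟩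
  have hPpos : 0 < P := by rw [← hP]; positivity
  have hSpos : 0 < S := by rw [← hS]; positivity
  have key : (h₁ + h₂ - h₃ - h₄) * (P * S) =
      2 * (a₁ * a₂ - a₃ * a₄) * (2 * t ^ 2 + a₁ * a₂ + a₃ * a₄ + P) := by
    rw [← hP, ← hS]; linear_combination (h₁ * h₂ + h₃ * h₄) * hA + 2 * hB
  have hM : 2 * t ^ 2 ≤ 2 * t ^ 2 + a₁ * a₂ + a₃ * a₄ + P := by
    have h12 := mul_pos hpa₁ hpa₂
    have h34 := mul_pos hpa₃ hpa₄
    linarith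
  have hMpos : 0 < 2 * t ^ 2 + a₁ * a₂ + a₃ * a₄ + P := by
    have h12 := mul_pos hpa₁ hpa₂
    have h34 := mul_pos hpa₃ hpa₄
    have ht2 := pow_pos ht 2
    linarith
  rw [hP, hS]
  have habs : |a₁ * a₂ - a₃ * a₄| = (2 * π * y) ^ 2 * |n₁ * n₂ - n₃ * n₄| := by
    rw [← ha₁, ← ha₂, ← ha₃, ← ha₄,
      show 2 * π * n₁ * y * (2 * π * n₂ * y) - 2 * π * n₃ * y * (2 * π * n₄ * y) =
        (2 * π * y) ^ 2 * (n₁ * n₂ - n₃ * n₄) by ring,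
      abs_mul, abs_of_nonneg (by positivity : (0:ℝ) ≤ (2 * π * y) ^ 2)]
  rw [ge_iff_le, div_le_iff₀ (mul_pos hPpos hSpos)]
  have hstep : |h₁ + h₂ - h₃ - h₄| * (P * S) =
      2 * |a₁ * a₂ - a₃ * a₄| * (2 * t ^ 2 + a₁ * a₂ + a₃ * a₄ + P) := by
    rw [show |h₁ + h₂ - h₃ - h₄| * (P * S) = |(h₁ + h₂ - h₃ - h₄) * (P * S)| by
        rw [abs_mul, abs_of_pos (mul_pos hPpos hSpos)], key, abs_mul, abs_mul,
      abs_of_pos hMpos]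
    norm_num
  calc 4 * (2 * π * y) ^ 2 * |n₁ * n₂ - n₃ * n₄| * t ^ 2
      = 2 * |a₁ * a₂ - a₃ * a₄| * (2 * t ^ 2) := by rw [habs]; ring
    _ ≤ 2 * |a₁ * a₂ - a₃ * a₄| * (2 * t ^ 2 + a₁ * a₂ + a₃ * a₄ + P) := by
        apply mul_le_mul_of_nonneg_left hM (by positivity : (0:ℝ) ≤ 2 * |a₁ * a₂ - a₃ * a₄|)
    _ = |h₁ + h₂ - h₃ - h₄| * (P * S) := hstep.symm
end

section
/- Let t > 0, y > 0 and let n₁, n₂, n₃, n₄ be positive real numbers with n₁ + n₂ = n₃ + n₄, n₁n₂ ≠ n₃n₄, and 2πnⱼy < t for j = 1,2,3,4; set hⱼ = √(t² − (2πnⱼy)²). Then (h₁ + h₂ − h₃ − h₄)·(n₁n₂ − n₃n₄) > 0; equivalently, the derivative d(𝐧,y) = −(h₁ + h₂ − h₃ − h₄)/y satisfies d(𝐧,y)/(n₃n₄ − n₁n₂) > 0. -/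
open Real

lemma sqrt_sum_lt_aux (t a n₁ n₂ n₃ n₄ : ℝ) (ha : 0 < a)
    (hn₁ : 0 < n₁) (hn₂ : 0 < n₂) (hn₃ : 0 < n₃) (hn₄ : 0 < n₄)
    (hsum : n₁ + n₂ = n₃ + n₄) (hp : n₃ * n₄ < n₁ * n₂)
    (h1 : a * n₁ < t) (h2 : a * n₂ < t) (h3 : a * n₃ < t) (h4 : a * n₄ < t) :
    Real.sqrt (t ^ 2 - (a * n₃) ^ 2) + Real.sqrt (t ^ 2 - (a * n₄) ^ 2) <
      Real.sqrt (t ^ 2 - (a * n₁) ^ 2) + Real.sqrt (t ^ 2 - (a * n₂) ^ 2) := by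
  have hu₁ : 0 < t ^ 2 - (a * n₁) ^ 2 := by nlinarith [mul_pos ha hn₁]
  have hu₂ : 0 < t ^ 2 - (a * n₂) ^ 2 := by nlinarith [mul_pos ha hn₂]
  have hu₃ : 0 < t ^ 2 - (a * n₃) ^ 2 := by nlinarith [mul_pos ha hn₃]
  have hu₄ : 0 < t ^ 2 - (a * n₄) ^ 2 := by nlinarith [mul_pos ha hn₄]
  have ht : 0 < t := lt_trans (mul_pos ha hn₁) h1
  have hid : (t ^ 2 - (a * n₁) ^ 2) * (t ^ 2 - (a * n₂) ^ 2) -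
      (t ^ 2 - (a * n₃) ^ 2) * (t ^ 2 - (a * n₄) ^ 2) =
      2 * t ^ 2 * a ^ 2 * (n₁ * n₂ - n₃ * n₄) +
        a ^ 4 * ((n₁ * n₂) ^ 2 - (n₃ * n₄) ^ 2) := by
    linear_combination (-(t ^ 2) * a ^ 2 * (n₁ + n₂ + n₃ + n₄)) * hsum
  have hid2 : (t ^ 2 - (a * n₁) ^ 2) + (t ^ 2 - (a * n₂) ^ 2) -
      ((t ^ 2 - (a * n₃) ^ 2) + (t ^ 2 - (a * n₄) ^ 2)) =
      2 * a ^ 2 * (n₁ * n₂ - n₃ * n₄) := by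
    linear_combination (-(a ^ 2) * (n₁ + n₂ + n₃ + n₄)) * hsum
  have hm : (t ^ 2 - (a * n₃) ^ 2) * (t ^ 2 - (a * n₄) ^ 2) <
      (t ^ 2 - (a * n₁) ^ 2) * (t ^ 2 - (a * n₂) ^ 2) := by
    nlinarith [hid, mul_pos (sub_pos.mpr hp) (mul_pos (mul_pos ht ht) (mul_pos ha ha)),
      mul_pos (sub_pos.mpr hp) (mul_pos (add_pos (mul_pos hn₁ hn₂) (mul_pos hn₃ hn₄))
        (mul_pos (mul_pos ha ha) (mul_pos ha ha)))]
  have hs : Real.sqrt ((t ^ 2 - (a * n₃) ^ 2) * (t ^ 2 - (a * n₄) ^ 2)) <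
      Real.sqrt ((t ^ 2 - (a * n₁) ^ 2) * (t ^ 2 - (a * n₂) ^ 2)) :=
    Real.sqrt_lt_sqrt (by positivity) hm
  have e1 : (Real.sqrt (t ^ 2 - (a * n₁) ^ 2) + Real.sqrt (t ^ 2 - (a * n₂) ^ 2)) ^ 2 =
      (t ^ 2 - (a * n₁) ^ 2) + (t ^ 2 - (a * n₂) ^ 2) +
        2 * Real.sqrt ((t ^ 2 - (a * n₁) ^ 2) * (t ^ 2 - (a * n₂) ^ 2)) := by
    rw [add_sq, Real.sq_sqrt hu₁.le, Real.sq_sqrt hu₂.le, Real.sqrt_mul hu₁.le]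
    ring
  have e2 : (Real.sqrt (t ^ 2 - (a * n₃) ^ 2) + Real.sqrt (t ^ 2 - (a * n₄) ^ 2)) ^ 2 =
      (t ^ 2 - (a * n₃) ^ 2) + (t ^ 2 - (a * n₄) ^ 2) +
        2 * Real.sqrt ((t ^ 2 - (a * n₃) ^ 2) * (t ^ 2 - (a * n₄) ^ 2)) := by
    rw [add_sq, Real.sq_sqrt hu₃.le, Real.sq_sqrt hu₄.le, Real.sqrt_mul hu₃.le]
    ring
  have hsq : (Real.sqrt (t ^ 2 - (a * n₃) ^ 2) + Real.sqrt (t ^ 2 - (a * n₄) ^ 2)) ^ 2 <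
      (Real.sqrt (t ^ 2 - (a * n₁) ^ 2) + Real.sqrt (t ^ 2 - (a * n₂) ^ 2)) ^ 2 := by
    rw [e1, e2]; nlinarith [hid2, hs, sq_nonneg a]
  exact lt_of_pow_lt_pow_left₀ 2 (by positivity) hsq

/-- Sign of `h₁ + h₂ - h₃ - h₄`: it agrees with the sign of `n₁n₂ - n₃n₄`;
equivalently `d(𝐧,y)/(n₃n₄ - n₁n₂) > 0` for `d(𝐧,y) = -(h₁+h₂-h₃-h₄)/y`. -/
theorem h_diff_sign
    (t y n₁ n₂ n₃ n₄ h₁ h₂ h₃ h₄ : ℝ)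
    (ht : 0 < t) (hy : 0 < y)
    (hn₁ : 0 < n₁) (hn₂ : 0 < n₂) (hn₃ : 0 < n₃) (hn₄ : 0 < n₄)
    (hsum : n₁ + n₂ = n₃ + n₄) (hne : n₁ * n₂ ≠ n₃ * n₄)
    (hlt₁ : 2 * π * n₁ * y < t) (hlt₂ : 2 * π * n₂ * y < t)
    (hlt₃ : 2 * π * n₃ * y < t) (hlt₄ : 2 * π * n₄ * y < t)
    (hh₁ : h₁ = Real.sqrt (t ^ 2 - (2 * π * n₁ * y) ^ 2))
    (hh₂ : h₂ = Real.sqrt (t ^ 2 - (2 * π * n₂ * y) ^ 2))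
    (hh₃ : h₃ = Real.sqrt (t ^ 2 - (2 * π * n₃ * y) ^ 2))
    (hh₄ : h₄ = Real.sqrt (t ^ 2 - (2 * π * n₄ * y) ^ 2)) :
    (h₁ + h₂ - h₃ - h₄) * (n₁ * n₂ - n₃ * n₄) > 0 ∧
      (-(h₁ + h₂ - h₃ - h₄) / y) / (n₃ * n₄ - n₁ * n₂) > 0 := by
  have ha : 0 < 2 * π * y := by positivity
  have ea : ∀ n : ℝ, 2 * π * n * y = (2 * π * y) * n := by intro n; ring
  rw [ea] at hlt₁ hlt₂ hlt₃ hlt₄ hh₁ hh₂ hh₃ hh₄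
  subst hh₁ hh₂ hh₃ hh₄
  rcases lt_or_gt_of_ne hne with hlt | hgt
  · have key := sqrt_sum_lt_aux t (2 * π * y) n₃ n₄ n₁ n₂ ha hn₃ hn₄ hn₁ hn₂
      hsum.symm hlt hlt₃ hlt₄ hlt₁ hlt₂
    constructor
    · nlinarith [key]
    · apply div_pos (div_pos _ hy) (by linarith)
      linarith
  · have key := sqrt_sum_lt_aux t (2 * π * y) n₁ n₂ n₃ n₄ ha hn₁ hn₂ hn₃ hn₄
      hsum hgt hlt₁ hlt₂ hlt₃ hlt₄
    constructor
    · nlinarith [key]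
    · rw [gt_iff_lt, div_pos_iff]
      right
      exact ⟨div_neg_of_neg_of_pos (by linarith) hy, by linarith⟩
end

section
/- Let t > 0, y > 0 and let n₁, n₂, n₃, n₄ be positive real numbers with n₁ + n₂ = n₃ + n₄ and 2πnⱼy < t for j = 1,2,3,4; set hⱼ = √(t² − (2πnⱼy)²). Then |h₁ + h₂ − h₃ − h₄| ≥ 2π²·y²·|n₁n₂ − n₃n₄|/t; in particular d(𝐧,y) = −(h₁ + h₂ − h₃ − h₄)/y satisfies |d(𝐧,y)| ≥ 2π²·y·|n₁n₂ − n₃n₄|/t. -/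
set_option maxHeartbeats 800000


open Real

private lemma aux_bound (t A B M SQ : ℝ) (ht : 0 < t) (hA : 0 ≤ A) (hB : 0 ≤ B)
    (hMle : M ≤ 8 * t ^ 3) (hSQ : 2 * t ^ 2 ≤ SQ) (h : A * M = 2 * SQ * B) :
    B / (2 * t) ≤ A := by
  have h1 : A * M ≤ A * (8 * t ^ 3) := mul_le_mul_of_nonneg_left hMle hA
  have h2 : 2 * t ^ 2 * B ≤ SQ * B := mul_le_mul_of_nonneg_right hSQ hB
  have h3 : 4 * t ^ 2 * B ≤ 8 * t ^ 3 * A := by nlinarith [h1, h2, h]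
  have h4 : (0:ℝ) < 4 * t ^ 2 := by positivity
  rw [show (8:ℝ) * t ^ 3 * A = 4 * t ^ 2 * (2 * t * A) by ring] at h3
  rw [show (4:ℝ) * t ^ 2 * B = 4 * t ^ 2 * B by ring] at h3
  have h5 : B ≤ 2 * t * A := le_of_mul_le_mul_left h3 h4
  rw [div_le_iff₀ (by positivity)]
  linarith

/-- Quantitative lower bound: `|h₁ + h₂ - h₃ - h₄| ≥ 2π²y²|n₁n₂ - n₃n₄|/t`,
and hence `|d(𝐧,y)| ≥ 2π²y|n₁n₂ - n₃n₄|/t` for `d(𝐧,y) = -(h₁+h₂-h₃-h₄)/y`. -/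
theorem h_diff_explicit_lower_bound
    (t y n₁ n₂ n₃ n₄ h₁ h₂ h₃ h₄ : ℝ)
    (ht : 0 < t) (hy : 0 < y)
    (hn₁ : 0 < n₁) (hn₂ : 0 < n₂) (hn₃ : 0 < n₃) (hn₄ : 0 < n₄)
    (hsum : n₁ + n₂ = n₃ + n₄)
    (hlt₁ : 2 * π * n₁ * y < t) (hlt₂ : 2 * π * n₂ * y < t)
    (hlt₃ : 2 * π * n₃ * y < t) (hlt₄ : 2 * π * n₄ * y < t)
    (hh₁ : h₁ = Real.sqrt (t ^ 2 - (2 * π * n₁ * y) ^ 2))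
    (hh₂ : h₂ = Real.sqrt (t ^ 2 - (2 * π * n₂ * y) ^ 2))
    (hh₃ : h₃ = Real.sqrt (t ^ 2 - (2 * π * n₃ * y) ^ 2))
    (hh₄ : h₄ = Real.sqrt (t ^ 2 - (2 * π * n₄ * y) ^ 2)) :
    |h₁ + h₂ - h₃ - h₄| ≥ 2 * π ^ 2 * y ^ 2 * |n₁ * n₂ - n₃ * n₄| / t ∧
      |(-(h₁ + h₂ - h₃ - h₄)) / y| ≥ 2 * π ^ 2 * y * |n₁ * n₂ - n₃ * n₄| / t := by
  have hπ : 0 < π := Real.pi_pos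
  set a₁ := 2 * π * n₁ * y with ha₁
  set a₂ := 2 * π * n₂ * y with ha₂
  set a₃ := 2 * π * n₃ * y with ha₃
  set a₄ := 2 * π * n₄ * y with ha₄
  have hA₁ : 0 < a₁ := by positivity
  have hA₂ : 0 < a₂ := by positivity
  have hA₃ : 0 < a₃ := by positivity
  have hA₄ : 0 < a₄ := by positivity
  have hasum : a₁ + a₂ = a₃ + a₄ := by rw [ha₁, ha₂, ha₃, ha₄]; linear_combination (2*π*y) * hsum
  have hp₁ : (0:ℝ) < t ^ 2 - a₁ ^ 2 := by nlinarith
  have hp₂ : (0:ℝ) < t ^ 2 - a₂ ^ 2 := by nlinarith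
  have hp₃ : (0:ℝ) < t ^ 2 - a₃ ^ 2 := by nlinarith
  have hp₄ : (0:ℝ) < t ^ 2 - a₄ ^ 2 := by nlinarith
  have hsq₁ : h₁ ^ 2 = t ^ 2 - a₁ ^ 2 := by rw [hh₁, Real.sq_sqrt hp₁.le]
  have hsq₂ : h₂ ^ 2 = t ^ 2 - a₂ ^ 2 := by rw [hh₂, Real.sq_sqrt hp₂.le]
  have hsq₃ : h₃ ^ 2 = t ^ 2 - a₃ ^ 2 := by rw [hh₃, Real.sq_sqrt hp₃.le]
  have hsq₄ : h₄ ^ 2 = t ^ 2 - a₄ ^ 2 := by rw [hh₄, Real.sq_sqrt hp₄.le]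
  have hpos₁ : 0 < h₁ := by rw [hh₁]; exact Real.sqrt_pos.mpr hp₁
  have hpos₂ : 0 < h₂ := by rw [hh₂]; exact Real.sqrt_pos.mpr hp₂
  have hpos₃ : 0 < h₃ := by rw [hh₃]; exact Real.sqrt_pos.mpr hp₃
  have hpos₄ : 0 < h₄ := by rw [hh₄]; exact Real.sqrt_pos.mpr hp₄
  have hle₁ : h₁ ≤ t := by
    rw [hh₁]
    calc Real.sqrt (t ^ 2 - a₁ ^ 2) ≤ Real.sqrt (t ^ 2) := Real.sqrt_le_sqrt (by linarith [sq_nonneg a₁])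
      _ = t := Real.sqrt_sq ht.le
  have hle₂ : h₂ ≤ t := by
    rw [hh₂]
    calc Real.sqrt (t ^ 2 - a₂ ^ 2) ≤ Real.sqrt (t ^ 2) := Real.sqrt_le_sqrt (by linarith [sq_nonneg a₂])
      _ = t := Real.sqrt_sq ht.le
  have hle₃ : h₃ ≤ t := by
    rw [hh₃]
    calc Real.sqrt (t ^ 2 - a₃ ^ 2) ≤ Real.sqrt (t ^ 2) := Real.sqrt_le_sqrt (by linarith [sq_nonneg a₃])
      _ = t := Real.sqrt_sq ht.le
  have hle₄ : h₄ ≤ t := by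
    rw [hh₄]
    calc Real.sqrt (t ^ 2 - a₄ ^ 2) ≤ Real.sqrt (t ^ 2) := Real.sqrt_le_sqrt (by linarith [sq_nonneg a₄])
      _ = t := Real.sqrt_sq ht.le
  set P := a₁ * a₂ - a₃ * a₄ with hP
  set S := h₁ * h₂ + h₃ * h₄ with hS
  set Q := 2 * t ^ 2 + a₁ * a₂ + a₃ * a₄ with hQ
  set D := h₁ + h₂ - h₃ - h₄ with hD
  have key1 : D * (h₁ + h₂ + h₃ + h₄) = 2 * P + 2 * (h₁ * h₂ - h₃ * h₄) := by
    rw [hD, hP]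
    linear_combination hsq₁ + hsq₂ - hsq₃ - hsq₄ - (a₁ + a₂ + a₃ + a₄) * hasum
  have key2 : (h₁ * h₂ - h₃ * h₄) * S = P * Q := by
    rw [hS, hP, hQ]
    linear_combination h₂^2 * hsq₁ + (t^2 - a₁^2) * hsq₂ - h₄^2 * hsq₃ - (t^2 - a₃^2) * hsq₄
      - t^2 * (a₁ + a₂ + a₃ + a₄) * hasum
  have hSpos : 0 < S := by rw [hS]; positivity
  have hQpos : 0 < Q := by rw [hQ]; positivity
  have hSigma : 0 < h₁ + h₂ + h₃ + h₄ := by positivity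
  set M := (h₁ + h₂ + h₃ + h₄) * S with hM
  have hMpos : 0 < M := by positivity
  have key : D * M = 2 * P * (S + Q) := by
    rw [hM]; linear_combination S * key1 + 2 * key2
  have hSle : S ≤ 2 * t ^ 2 := by
    have h12 : h₁ * h₂ ≤ t * t := mul_le_mul hle₁ hle₂ hpos₂.le ht.le
    have h34 : h₃ * h₄ ≤ t * t := mul_le_mul hle₃ hle₄ hpos₄.le ht.le
    have htt : t * t = t ^ 2 := (sq t).symm
    rw [hS]; linarith
  have hMle : M ≤ 8 * t ^ 3 := by
    rw [hM]
    calc (h₁ + h₂ + h₃ + h₄) * S ≤ (4 * t) * (2 * t ^ 2) := by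
          apply mul_le_mul (by linarith) hSle hSpos.le (by positivity)
      _ = 8 * t ^ 3 := by ring
  have hSQ : 2 * t ^ 2 ≤ S + Q := by
    have h12 := mul_pos hA₁ hA₂
    have h34 := mul_pos hA₃ hA₄
    rw [hQ]; linarith
  have habs : |D| * M = 2 * (S + Q) * |P| := by
    rw [← abs_of_pos hMpos, ← abs_mul, key,
      show 2 * P * (S + Q) = P * (2 * (S + Q)) by ring, abs_mul,
      abs_of_pos (by linarith : (0:ℝ) < 2 * (S + Q))]
    ring
  have hmain : |D| ≥ |P| / (2 * t) :=
    aux_bound t |D| |P| M (S + Q) ht (abs_nonneg D) (abs_nonneg P) hMle hSQ habs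
  have hPval : P = 4 * π ^ 2 * y ^ 2 * (n₁ * n₂ - n₃ * n₄) := by
    rw [hP, ha₁, ha₂, ha₃, ha₄]; ring
  have hPabs : |P| = 4 * π ^ 2 * y ^ 2 * |n₁ * n₂ - n₃ * n₄| := by
    rw [hPval, abs_mul, abs_of_pos (by positivity : (0:ℝ) < 4 * π ^ 2 * y ^ 2)]
  have hgoal1 : |D| ≥ 2 * π ^ 2 * y ^ 2 * |n₁ * n₂ - n₃ * n₄| / t := by
    have : 2 * π ^ 2 * y ^ 2 * |n₁ * n₂ - n₃ * n₄| / t = |P| / (2 * t) := by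
      rw [hPabs]; field_simp; ring
    rw [this]; exact hmain
  refine ⟨hgoal1, ?_⟩
  rw [abs_div, abs_neg, abs_of_pos hy, ge_iff_le, le_div_iff₀ hy]
  have heq : 2 * π ^ 2 * y * |n₁ * n₂ - n₃ * n₄| / t * y
      = 2 * π ^ 2 * y ^ 2 * |n₁ * n₂ - n₃ * n₄| / t := by
    field_simp
  rw [heq]; exact hgoal1
end

section
/- Let t > 0, y > 0 and let n₁, n₂, n₃, n₄ be positive real numbers with n₁ + n₂ = n₃ + n₄, n₁n₂ ≠ n₃n₄, and 2πnⱼy < t for j = 1,2,3,4; set hⱼ = √(t² − (2πnⱼy)²). Then (1/h₁ + 1/h₂ − 1/h₃ − 1/h₄)·(n₃n₄ − n₁n₂) > 0; consequently the second derivative d′(𝐧,y) = (t²/y²)·(1/h₁ + 1/h₂ − 1/h₃ − 1/h₄) satisfies d′(𝐧,y)/d(𝐧,y) > 0, where d(𝐧,y) = −(h₁ + h₂ − h₃ − h₄)/y. -/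
open Real

set_option maxHeartbeats 2000000 in
/-- Auxiliary: if `a₁ + a₂ = a₃ + a₄` with all `aⱼ ∈ (0, t)` and
`a₃ a₄ < a₁ a₂`, then `√(t²-a₃²)+√(t²-a₄²) < √(t²-a₁²)+√(t²-a₂²)` while
the sums of reciprocals compare the other way. -/
lemma h_aux (t a₁ a₂ a₃ a₄ : ℝ) (ht : 0 < t)
    (p1 : 0 < a₁) (p2 : 0 < a₂) (p3 : 0 < a₃) (p4 : 0 < a₄)
    (l1 : a₁ < t) (l2 : a₂ < t) (l3 : a₃ < t) (l4 : a₄ < t)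
    (hs : a₁ + a₂ = a₃ + a₄) (hp : a₃ * a₄ < a₁ * a₂) :
    Real.sqrt (t ^ 2 - a₃ ^ 2) + Real.sqrt (t ^ 2 - a₄ ^ 2) <
      Real.sqrt (t ^ 2 - a₁ ^ 2) + Real.sqrt (t ^ 2 - a₂ ^ 2) ∧
    1 / Real.sqrt (t ^ 2 - a₁ ^ 2) + 1 / Real.sqrt (t ^ 2 - a₂ ^ 2) <
      1 / Real.sqrt (t ^ 2 - a₃ ^ 2) + 1 / Real.sqrt (t ^ 2 - a₄ ^ 2) := by
  have ha₄ : a₄ = a₁ + a₂ - a₃ := by linarith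
  subst ha₄
  have e1 : 0 < t ^ 2 - a₁ ^ 2 := by nlinarith
  have e2 : 0 < t ^ 2 - a₂ ^ 2 := by nlinarith
  have e3 : 0 < t ^ 2 - a₃ ^ 2 := by nlinarith
  have e4 : 0 < t ^ 2 - (a₁ + a₂ - a₃) ^ 2 := by nlinarith
  set b₁ := Real.sqrt (t ^ 2 - a₁ ^ 2) with hb₁
  set b₂ := Real.sqrt (t ^ 2 - a₂ ^ 2) with hb₂
  set b₃ := Real.sqrt (t ^ 2 - a₃ ^ 2) with hb₃
  set b₄ := Real.sqrt (t ^ 2 - (a₁ + a₂ - a₃) ^ 2) with hb₄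
  have pb₁ : 0 < b₁ := Real.sqrt_pos.mpr e1
  have pb₂ : 0 < b₂ := Real.sqrt_pos.mpr e2
  have pb₃ : 0 < b₃ := Real.sqrt_pos.mpr e3
  have pb₄ : 0 < b₄ := Real.sqrt_pos.mpr e4
  have sb₁ : b₁ ^ 2 = t ^ 2 - a₁ ^ 2 := Real.sq_sqrt e1.le
  have sb₂ : b₂ ^ 2 = t ^ 2 - a₂ ^ 2 := Real.sq_sqrt e2.le
  have sb₃ : b₃ ^ 2 = t ^ 2 - a₃ ^ 2 := Real.sq_sqrt e3.le
  have sb₄ : b₄ ^ 2 = t ^ 2 - (a₁ + a₂ - a₃) ^ 2 := Real.sq_sqrt e4.le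
  -- products
  have pr₁ : 0 < b₁ * b₂ := mul_pos pb₁ pb₂
  have pr₃ : 0 < b₃ * b₄ := mul_pos pb₃ pb₄
  have sr₁ : (b₁ * b₂) ^ 2 = (t ^ 2 - a₁ ^ 2) * (t ^ 2 - a₂ ^ 2) := by
    rw [mul_pow, sb₁, sb₂]
  have sr₃ : (b₃ * b₄) ^ 2 = (t ^ 2 - a₃ ^ 2) * (t ^ 2 - (a₁ + a₂ - a₃) ^ 2) := by
    rw [mul_pow, sb₃, sb₄]
  clear_value b₁ b₂ b₃ b₄
  -- r₁ > r₃
  have hq : a₃ * (a₁ + a₂ - a₃) < a₁ * a₂ := hp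
  have hid1 : (t ^ 2 - a₁ ^ 2) * (t ^ 2 - a₂ ^ 2)
      - (t ^ 2 - a₃ ^ 2) * (t ^ 2 - (a₁ + a₂ - a₃) ^ 2)
      = (a₁ * a₂ - a₃ * (a₁ + a₂ - a₃))
        * (2 * t ^ 2 + a₁ * a₂ + a₃ * (a₁ + a₂ - a₃)) := by ring
  have hpos1 : 0 < (a₁ * a₂ - a₃ * (a₁ + a₂ - a₃))
      * (2 * t ^ 2 + a₁ * a₂ + a₃ * (a₁ + a₂ - a₃)) := by
    apply mul_pos (sub_pos.mpr hq)
    have h0 : 0 < a₃ * (a₁ + a₂ - a₃) := mul_pos p3 p4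
    have h1 : (0:ℝ) < t ^ 2 := pow_pos ht 2
    have h2 : 0 < a₁ * a₂ := mul_pos p1 p2
    linarith
  have hrsq : (b₃ * b₄) ^ 2 < (b₁ * b₂) ^ 2 := by
    rw [sr₁, sr₃, ← sub_pos, hid1]; exact hpos1
  have hr : b₃ * b₄ < b₁ * b₂ :=
    lt_of_pow_lt_pow_left₀ 2 pr₁.le hrsq
  have hq2 : ((t ^ 2 - a₁ ^ 2) + (t ^ 2 - a₂ ^ 2))
      - ((t ^ 2 - a₃ ^ 2) + (t ^ 2 - (a₁ + a₂ - a₃) ^ 2))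
      = 2 * (a₁ * a₂ - a₃ * (a₁ + a₂ - a₃)) := by ring
  constructor
  · -- sums of square roots
    have ex1 : (b₁ + b₂) ^ 2 = b₁ ^ 2 + b₂ ^ 2 + 2 * (b₁ * b₂) := by ring
    have ex3 : (b₃ + b₄) ^ 2 = b₃ ^ 2 + b₄ ^ 2 + 2 * (b₃ * b₄) := by ring
    have hsq : (b₃ + b₄) ^ 2 < (b₁ + b₂) ^ 2 := by
      rw [ex1, ex3, sb₁, sb₂, sb₃, sb₄]
      linarith [hr, hq, hq2]
    have := lt_of_pow_lt_pow_left₀ 2 (by positivity : (0:ℝ) ≤ b₁ + b₂) hsq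
    linarith
  · -- sums of reciprocals
    -- key polynomial inequality: A * r₃² < C * r₁² where A = b₁²+b₂², C = b₃²+b₄²
    have key1 : (b₁ ^ 2 + b₂ ^ 2) * (b₃ * b₄) ^ 2 < (b₃ ^ 2 + b₄ ^ 2) * (b₁ * b₂) ^ 2 := by
      rw [sr₁, sr₃, sb₁, sb₂, sb₃, sb₄]
      have hid2 : ((t ^ 2 - a₃ ^ 2) + (t ^ 2 - (a₁ + a₂ - a₃) ^ 2))
            * ((t ^ 2 - a₁ ^ 2) * (t ^ 2 - a₂ ^ 2))
          - ((t ^ 2 - a₁ ^ 2) + (t ^ 2 - a₂ ^ 2))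
            * ((t ^ 2 - a₃ ^ 2) * (t ^ 2 - (a₁ + a₂ - a₃) ^ 2))
          = (a₁ * a₂ - a₃ * (a₁ + a₂ - a₃))
            * (2 * (t ^ 2 + a₁ * a₂) * (t ^ 2 + a₃ * (a₁ + a₂ - a₃))
              - (a₁ + a₂) ^ 2 * ((t ^ 2 + a₁ * a₂) + (t ^ 2 + a₃ * (a₁ + a₂ - a₃)))
              + 2 * t ^ 2 * (a₁ + a₂) ^ 2) := by ring
      have hB : 0 < 2 * (t ^ 2 + a₁ * a₂) * (t ^ 2 + a₃ * (a₁ + a₂ - a₃))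
            - (a₁ + a₂) ^ 2 * ((t ^ 2 + a₁ * a₂) + (t ^ 2 + a₃ * (a₁ + a₂ - a₃)))
            + 2 * t ^ 2 * (a₁ + a₂) ^ 2 := by
        have hw3 : 0 < 2 * (t ^ 2 + a₃ * (a₁ + a₂ - a₃)) - (a₁ + a₂) ^ 2 := by
          have hiden : 2 * (t ^ 2 + a₃ * (a₁ + a₂ - a₃)) - (a₁ + a₂) ^ 2
              = (t ^ 2 - a₃ ^ 2) + (t ^ 2 - (a₁ + a₂ - a₃) ^ 2) := by ring
          linarith [e3, e4]
        have hw3' : a₃ * (a₁ + a₂ - a₃) < t ^ 2 := by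
          have hα : a₃ * (a₁ + a₂ - a₃) < a₃ * t := mul_lt_mul_of_pos_left l4 p3
          have hβ : a₃ * t < t * t := mul_lt_mul_of_pos_right l3 ht
          have ht2 : t * t = t ^ 2 := by ring
          linarith
        have hw1 : 0 < t ^ 2 + a₁ * a₂ := by
          have := mul_pos p1 p2
          have : (0:ℝ) < t ^ 2 := pow_pos ht 2
          linarith [mul_pos p1 p2]
        have hidB : 2 * (t ^ 2 + a₁ * a₂) * (t ^ 2 + a₃ * (a₁ + a₂ - a₃))
            - (a₁ + a₂) ^ 2 * ((t ^ 2 + a₁ * a₂) + (t ^ 2 + a₃ * (a₁ + a₂ - a₃)))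
            + 2 * t ^ 2 * (a₁ + a₂) ^ 2
            = (t ^ 2 + a₁ * a₂) * (2 * (t ^ 2 + a₃ * (a₁ + a₂ - a₃)) - (a₁ + a₂) ^ 2)
              + (a₁ + a₂) ^ 2 * (t ^ 2 - a₃ * (a₁ + a₂ - a₃)) := by ring
        have hA := mul_pos hw1 hw3
        have hC := mul_pos (pow_pos (add_pos p1 p2) 2) (sub_pos.mpr hw3')
        linarith [hA, hC, hidB]
      rw [← sub_pos, hid2]
      exact mul_pos (sub_pos.mpr hq) hB
    have key2 : 2 * (b₁ * b₂) * (b₃ * b₄) ^ 2 < 2 * (b₃ * b₄) * (b₁ * b₂) ^ 2 := by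
      rw [← sub_pos]
      have hγ := mul_pos (mul_pos pr₁ pr₃) (sub_pos.mpr hr)
      calc (0:ℝ) < 2 * ((b₁ * b₂) * (b₃ * b₄) * (b₁ * b₂ - b₃ * b₄)) := by linarith
        _ = 2 * (b₃ * b₄) * (b₁ * b₂) ^ 2 - 2 * (b₁ * b₂) * (b₃ * b₄) ^ 2 := by ring
    have hsq2 : ((b₁ + b₂) * (b₃ * b₄)) ^ 2 < ((b₃ + b₄) * (b₁ * b₂)) ^ 2 := by
      have hd1 : ((b₁ + b₂) * (b₃ * b₄)) ^ 2
          = (b₁ ^ 2 + b₂ ^ 2) * (b₃ * b₄) ^ 2 + 2 * (b₁ * b₂) * (b₃ * b₄) ^ 2 := by ring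
      have hd2 : ((b₃ + b₄) * (b₁ * b₂)) ^ 2
          = (b₃ ^ 2 + b₄ ^ 2) * (b₁ * b₂) ^ 2 + 2 * (b₃ * b₄) * (b₁ * b₂) ^ 2 := by ring
      linarith [key1, key2, hd1, hd2]
    have hlt : (b₁ + b₂) * (b₃ * b₄) < (b₃ + b₄) * (b₁ * b₂) :=
      lt_of_pow_lt_pow_left₀ 2 (by positivity) hsq2
    have hdiv : (b₁ + b₂) / (b₁ * b₂) < (b₃ + b₄) / (b₃ * b₄) :=
      (div_lt_div_iff₀ pr₁ pr₃).mpr hlt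
    have e₁ : 1 / b₁ + 1 / b₂ = (b₁ + b₂) / (b₁ * b₂) := by
      field_simp; ring
    have e₂ : 1 / b₃ + 1 / b₄ = (b₃ + b₄) / (b₃ * b₄) := by
      field_simp; ring
    rw [e₁, e₂]; exact hdiv

set_option maxHeartbeats 2000000 in
/-- Sign of `1/h₁ + 1/h₂ - 1/h₃ - 1/h₄`: it agrees with the sign of
`n₃n₄ - n₁n₂`; consequently `d'(𝐧,y)/d(𝐧,y) > 0`, where
`d(𝐧,y) = -(h₁+h₂-h₃-h₄)/y` and `d'(𝐧,y) = (t²/y²)(1/h₁+1/h₂-1/h₃-1/h₄)`. -/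
theorem h_inv_diff_sign
    (t y n₁ n₂ n₃ n₄ h₁ h₂ h₃ h₄ : ℝ)
    (ht : 0 < t) (hy : 0 < y)
    (hn₁ : 0 < n₁) (hn₂ : 0 < n₂) (hn₃ : 0 < n₃) (hn₄ : 0 < n₄)
    (hsum : n₁ + n₂ = n₃ + n₄) (hne : n₁ * n₂ ≠ n₃ * n₄)
    (hlt₁ : 2 * π * n₁ * y < t) (hlt₂ : 2 * π * n₂ * y < t)
    (hlt₃ : 2 * π * n₃ * y < t) (hlt₄ : 2 * π * n₄ * y < t)
    (hh₁ : h₁ = Real.sqrt (t ^ 2 - (2 * π * n₁ * y) ^ 2))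
    (hh₂ : h₂ = Real.sqrt (t ^ 2 - (2 * π * n₂ * y) ^ 2))
    (hh₃ : h₃ = Real.sqrt (t ^ 2 - (2 * π * n₃ * y) ^ 2))
    (hh₄ : h₄ = Real.sqrt (t ^ 2 - (2 * π * n₄ * y) ^ 2)) :
    (1 / h₁ + 1 / h₂ - 1 / h₃ - 1 / h₄) * (n₃ * n₄ - n₁ * n₂) > 0 ∧
      ((t ^ 2 / y ^ 2) * (1 / h₁ + 1 / h₂ - 1 / h₃ - 1 / h₄)) /
        (-(h₁ + h₂ - h₃ - h₄) / y) > 0 := by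
  have hπ : 0 < π := Real.pi_pos
  set a₁ := 2 * π * n₁ * y with ha₁
  set a₂ := 2 * π * n₂ * y with ha₂
  set a₃ := 2 * π * n₃ * y with ha₃
  set a₄ := 2 * π * n₄ * y with ha₄
  have pa₁ : 0 < a₁ := by positivity
  have pa₂ : 0 < a₂ := by positivity
  have pa₃ : 0 < a₃ := by positivity
  have pa₄ : 0 < a₄ := by positivity
  have hs : a₁ + a₂ = a₃ + a₄ := by rw [ha₁, ha₂, ha₃, ha₄]; linear_combination (2 * π * y) * hsum
  have hsq : (0:ℝ) < (2 * π * y) ^ 2 := by positivity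
  rcases lt_or_gt_of_ne hne with hc | hc
  · -- n₁n₂ < n₃n₄ : products a₁a₂ < a₃a₄
    have hpa : a₁ * a₂ < a₃ * a₄ := by
      have hid : a₃ * a₄ - a₁ * a₂ = (2 * π * y) ^ 2 * (n₃ * n₄ - n₁ * n₂) := by
        rw [ha₁, ha₂, ha₃, ha₄]; ring
      linarith [mul_pos hsq (sub_pos.mpr hc), hid]
    obtain ⟨hS, hR⟩ := h_aux t a₃ a₄ a₁ a₂ ht pa₃ pa₄ pa₁ pa₂ hlt₃ hlt₄ hlt₁ hlt₂ hs.symm hpa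
    rw [← hh₁, ← hh₂, ← hh₃, ← hh₄] at hS hR
    have hinv : 0 < 1 / h₁ + 1 / h₂ - 1 / h₃ - 1 / h₄ := by linarith
    constructor
    · exact mul_pos hinv (sub_pos.mpr hc)
    · apply div_pos
      · exact mul_pos (by positivity) hinv
      · apply div_pos (by linarith) hy
  · -- n₃n₄ < n₁n₂ : products a₃a₄ < a₁a₂
    have hpa : a₃ * a₄ < a₁ * a₂ := by
      have hid : a₁ * a₂ - a₃ * a₄ = (2 * π * y) ^ 2 * (n₁ * n₂ - n₃ * n₄) := by
        rw [ha₁, ha₂, ha₃, ha₄]; ring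
      linarith [mul_pos hsq (sub_pos.mpr hc), hid]
    obtain ⟨hS, hR⟩ := h_aux t a₁ a₂ a₃ a₄ ht pa₁ pa₂ pa₃ pa₄ hlt₁ hlt₂ hlt₃ hlt₄ hs hpa
    rw [← hh₁, ← hh₂, ← hh₃, ← hh₄] at hS hR
    have hinv : 1 / h₁ + 1 / h₂ - 1 / h₃ - 1 / h₄ < 0 := by linarith
    have hden : 0 < h₁ + h₂ - h₃ - h₄ := by linarith
    constructor
    · have h2 : n₃ * n₄ - n₁ * n₂ < 0 := sub_neg.mpr hc
      exact mul_pos_of_neg_of_neg hinv h2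
    · rw [gt_iff_lt, div_pos_iff]
      right
      constructor
      · have hts : 0 < t ^ 2 / y ^ 2 := by positivity
        exact mul_neg_of_pos_of_neg hts hinv
      · rw [div_neg_iff]
        right
        exact ⟨by linarith, hy⟩
end

section
/- Let t ≥ 1, 0 < δ ≤ 1, y > 0, and let n₁, n₂, n₃, n₄ be positive real numbers with n₁ + n₂ = n₃ + n₄ and t − t^{1−δ} ≤ 2πnⱼy < t for j = 1,2,3,4; set hⱼ = √(t² − (2πnⱼy)²). Then |h₁ + h₂ − h₃ − h₄| ≥ y²·|n₁n₂ − n₃n₄|·t^{(3δ/2) − 1}; in particular d(𝐧,y) = −(h₁ + h₂ − h₃ − h₄)/y satisfies |d(𝐧,y)| ≥ y·|n₁n₂ − n₃n₄|·t^{(3δ/2) − 1}. -/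
open Real

set_option maxHeartbeats 1000000

lemma sqrt2_le_pi_sq : Real.sqrt 2 ≤ π ^ 2 := by
  have h2 : Real.sqrt 2 ≤ 2 := by
    nlinarith [Real.sq_sqrt (by norm_num : (0:ℝ) ≤ 2), Real.sqrt_nonneg 2]
  nlinarith [Real.pi_gt_three]

/-- Lower bound for `|h₁ + h₂ - h₃ - h₄|` in the transition range
`t - t^(1-δ) ≤ 2πnⱼy < t`. -/
theorem h_diff_transition_lower_bound
    (t δ y n₁ n₂ n₃ n₄ h₁ h₂ h₃ h₄ : ℝ)
    (ht : 1 ≤ t) (hδ0 : 0 < δ) (hδ1 : δ ≤ 1) (hy : 0 < y)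
    (hn₁ : 0 < n₁) (hn₂ : 0 < n₂) (hn₃ : 0 < n₃) (hn₄ : 0 < n₄)
    (hsum : n₁ + n₂ = n₃ + n₄)
    (hge₁ : t - t ^ (1 - δ) ≤ 2 * π * n₁ * y) (hlt₁ : 2 * π * n₁ * y < t)
    (hge₂ : t - t ^ (1 - δ) ≤ 2 * π * n₂ * y) (hlt₂ : 2 * π * n₂ * y < t)
    (hge₃ : t - t ^ (1 - δ) ≤ 2 * π * n₃ * y) (hlt₃ : 2 * π * n₃ * y < t)
    (hge₄ : t - t ^ (1 - δ) ≤ 2 * π * n₄ * y) (hlt₄ : 2 * π * n₄ * y < t)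
    (hh₁ : h₁ = Real.sqrt (t ^ 2 - (2 * π * n₁ * y) ^ 2))
    (hh₂ : h₂ = Real.sqrt (t ^ 2 - (2 * π * n₂ * y) ^ 2))
    (hh₃ : h₃ = Real.sqrt (t ^ 2 - (2 * π * n₃ * y) ^ 2))
    (hh₄ : h₄ = Real.sqrt (t ^ 2 - (2 * π * n₄ * y) ^ 2)) :
    |h₁ + h₂ - h₃ - h₄| ≥ y ^ 2 * |n₁ * n₂ - n₃ * n₄| * t ^ (3 * δ / 2 - 1) ∧
      |(-(h₁ + h₂ - h₃ - h₄)) / y| ≥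
        y * |n₁ * n₂ - n₃ * n₄| * t ^ (3 * δ / 2 - 1) := by
  have hπ : (0:ℝ) < π := Real.pi_pos
  have ht0 : (0:ℝ) < t := lt_of_lt_of_le one_pos ht
  set a₁ := 2 * π * n₁ * y with ha₁d
  set a₂ := 2 * π * n₂ * y with ha₂d
  set a₃ := 2 * π * n₃ * y with ha₃d
  set a₄ := 2 * π * n₄ * y with ha₄d
  set T := t ^ (1 - δ) with hTd
  have hT0 : 0 < T := Real.rpow_pos_of_pos ht0 _
  have ha₁0 : 0 < a₁ := by rw [ha₁d]; positivity
  have ha₂0 : 0 < a₂ := by rw [ha₂d]; positivity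
  have ha₃0 : 0 < a₃ := by rw [ha₃d]; positivity
  have ha₄0 : 0 < a₄ := by rw [ha₄d]; positivity
  have hs₁ : 0 < t ^ 2 - a₁ ^ 2 := by
    calc (0:ℝ) < (t - a₁) * (t + a₁) :=
          mul_pos (sub_pos.mpr hlt₁) (by linarith)
      _ = t ^ 2 - a₁ ^ 2 := by ring
  have hs₂ : 0 < t ^ 2 - a₂ ^ 2 := by
    calc (0:ℝ) < (t - a₂) * (t + a₂) :=
          mul_pos (sub_pos.mpr hlt₂) (by linarith)
      _ = t ^ 2 - a₂ ^ 2 := by ring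
  have hs₃ : 0 < t ^ 2 - a₃ ^ 2 := by
    calc (0:ℝ) < (t - a₃) * (t + a₃) :=
          mul_pos (sub_pos.mpr hlt₃) (by linarith)
      _ = t ^ 2 - a₃ ^ 2 := by ring
  have hs₄ : 0 < t ^ 2 - a₄ ^ 2 := by
    calc (0:ℝ) < (t - a₄) * (t + a₄) :=
          mul_pos (sub_pos.mpr hlt₄) (by linarith)
      _ = t ^ 2 - a₄ ^ 2 := by ring
  have hq₁ : h₁ ^ 2 = t ^ 2 - a₁ ^ 2 := by rw [hh₁]; exact Real.sq_sqrt hs₁.le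
  have hq₂ : h₂ ^ 2 = t ^ 2 - a₂ ^ 2 := by rw [hh₂]; exact Real.sq_sqrt hs₂.le
  have hq₃ : h₃ ^ 2 = t ^ 2 - a₃ ^ 2 := by rw [hh₃]; exact Real.sq_sqrt hs₃.le
  have hq₄ : h₄ ^ 2 = t ^ 2 - a₄ ^ 2 := by rw [hh₄]; exact Real.sq_sqrt hs₄.le
  have hp₁ : 0 < h₁ := by rw [hh₁]; exact Real.sqrt_pos.mpr hs₁
  have hp₂ : 0 < h₂ := by rw [hh₂]; exact Real.sqrt_pos.mpr hs₂
  have hp₃ : 0 < h₃ := by rw [hh₃]; exact Real.sqrt_pos.mpr hs₃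
  have hp₄ : 0 < h₄ := by rw [hh₄]; exact Real.sqrt_pos.mpr hs₄
  have ha : a₁ + a₂ = a₃ + a₄ := by
    rw [ha₁d, ha₂d, ha₃d, ha₄d]; linear_combination (2 * π * y) * hsum
  have hub₁ : t ^ 2 - a₁ ^ 2 ≤ 2 * t * T := by
    calc t ^ 2 - a₁ ^ 2 = (t - a₁) * (t + a₁) := by ring
      _ ≤ T * (2 * t) :=
          mul_le_mul (by linarith) (by linarith) (by linarith) hT0.le
      _ = 2 * t * T := by ring
  have hub₂ : t ^ 2 - a₂ ^ 2 ≤ 2 * t * T := by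
    calc t ^ 2 - a₂ ^ 2 = (t - a₂) * (t + a₂) := by ring
      _ ≤ T * (2 * t) :=
          mul_le_mul (by linarith) (by linarith) (by linarith) hT0.le
      _ = 2 * t * T := by ring
  have hub₃ : t ^ 2 - a₃ ^ 2 ≤ 2 * t * T := by
    calc t ^ 2 - a₃ ^ 2 = (t - a₃) * (t + a₃) := by ring
      _ ≤ T * (2 * t) :=
          mul_le_mul (by linarith) (by linarith) (by linarith) hT0.le
      _ = 2 * t * T := by ring
  have hub₄ : t ^ 2 - a₄ ^ 2 ≤ 2 * t * T := by
    calc t ^ 2 - a₄ ^ 2 = (t - a₄) * (t + a₄) := by ring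
      _ ≤ T * (2 * t) :=
          mul_le_mul (by linarith) (by linarith) (by linarith) hT0.le
      _ = 2 * t * T := by ring
  set M := Real.sqrt (2 * t * T) with hMd
  have htT0 : (0:ℝ) < 2 * t * T := by positivity
  have hM0 : 0 < M := Real.sqrt_pos.mpr htT0
  have hM2 : M ^ 2 = 2 * t * T := Real.sq_sqrt htT0.le
  have hm₁ : h₁ ≤ M := by rw [hh₁, hMd]; exact Real.sqrt_le_sqrt hub₁
  have hm₂ : h₂ ≤ M := by rw [hh₂, hMd]; exact Real.sqrt_le_sqrt hub₂
  have hm₃ : h₃ ≤ M := by rw [hh₃, hMd]; exact Real.sqrt_le_sqrt hub₃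
  have hm₄ : h₄ ≤ M := by rw [hh₄, hMd]; exact Real.sqrt_le_sqrt hub₄
  -- key algebraic identities
  set X := h₁ + h₂ - h₃ - h₄ with hXd
  set S := h₁ + h₂ + h₃ + h₄ with hSd
  set P := h₁ * h₂ + h₃ * h₄ with hPd
  set Δ := a₁ * a₂ - a₃ * a₄ with hΔd
  have key1 : X * S = 2 * Δ + 2 * (h₁ * h₂ - h₃ * h₄) := by
    rw [hXd, hSd, hΔd]
    linear_combination hq₁ + hq₂ - hq₃ - hq₄ - (a₁ + a₂ + a₃ + a₄) * ha
  have key2 : (h₁ * h₂ - h₃ * h₄) * P = Δ * (2 * t ^ 2 + a₁ * a₂ + a₃ * a₄) := by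
    rw [hPd, hΔd]
    linear_combination (h₂ ^ 2) * hq₁ + (t ^ 2 - a₁ ^ 2) * hq₂ - (h₄ ^ 2) * hq₃
      - (t ^ 2 - a₃ ^ 2) * hq₄ - t ^ 2 * (a₁ + a₂ + a₃ + a₄) * ha
  have key : X * (S * P) = 2 * Δ * (P + 2 * t ^ 2 + a₁ * a₂ + a₃ * a₄) := by
    linear_combination P * key1 + 2 * key2
  have hS0 : 0 < S := by rw [hSd]; linarith
  have hP0 : 0 < P := by
    rw [hPd]; exact add_pos (mul_pos hp₁ hp₂) (mul_pos hp₃ hp₄)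
  have hSP0 : 0 < S * P := mul_pos hS0 hP0
  have hbig0 : 0 < P + 2 * t ^ 2 + a₁ * a₂ + a₃ * a₄ := by
    have h1 := mul_pos ha₁0 ha₂0
    have h2 := mul_pos ha₃0 ha₄0
    have h3 := pow_pos ht0 2
    linarith
  have habs : |X| * (S * P) = 2 * |Δ| * (P + 2 * t ^ 2 + a₁ * a₂ + a₃ * a₄) := by
    rw [← abs_of_pos hSP0, ← abs_mul, key, abs_mul, abs_mul, abs_of_pos hbig0,
      abs_two]
  have hΔ0 : 0 ≤ |Δ| := abs_nonneg _
  have hlow : 4 * |Δ| * t ^ 2 ≤ |X| * (S * P) := by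
    have h2 : 2 * t ^ 2 ≤ P + 2 * t ^ 2 + a₁ * a₂ + a₃ * a₄ := by
      have h1 := mul_pos ha₁0 ha₂0
      have h2' := mul_pos ha₃0 ha₄0
      linarith
    calc 4 * |Δ| * t ^ 2 = 2 * |Δ| * (2 * t ^ 2) := by ring
      _ ≤ 2 * |Δ| * (P + 2 * t ^ 2 + a₁ * a₂ + a₃ * a₄) :=
          mul_le_mul_of_nonneg_left h2 (by positivity)
      _ = |X| * (S * P) := habs.symm
  -- upper bound on S * P
  have hSP : S * P ≤ 8 * M ^ 3 := by
    have hPM : P ≤ 2 * (M * M) := by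
      have u1 := mul_le_mul hm₁ hm₂ hp₂.le hM0.le
      have u2 := mul_le_mul hm₃ hm₄ hp₄.le hM0.le
      rw [hPd]; linarith
    have hSM : S ≤ 4 * M := by rw [hSd]; linarith
    calc S * P ≤ (4 * M) * (2 * (M * M)) :=
          mul_le_mul hSM hPM hP0.le (by positivity)
      _ = 8 * M ^ 3 := by ring
  have hXnn : 0 ≤ |X| := abs_nonneg _
  have hmain : 4 * |Δ| * t ^ 2 ≤ |X| * (8 * M ^ 3) :=
    le_trans hlow (mul_le_mul_of_nonneg_left hSP hXnn)
  -- rpow computation : M = √2 * t ^ ((2 - δ)/2)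
  have htT : 2 * t * T = 2 * t ^ ((2:ℝ) - δ) := by
    rw [hTd, show (2:ℝ) - δ = 1 + (1 - δ) by ring, Real.rpow_add ht0,
      Real.rpow_one]
    ring
  have hMval : M = Real.sqrt 2 * t ^ (((2:ℝ) - δ) / 2) := by
    rw [hMd, htT, Real.sqrt_mul (by norm_num : (0:ℝ) ≤ 2), Real.sqrt_eq_rpow (t ^ ((2:ℝ) - δ)),
      ← Real.rpow_mul ht0.le]
    ring_nf
  have hsqrt2 : Real.sqrt 2 ^ 2 = 2 := Real.sq_sqrt (by norm_num)
  have hsqrt2pos : 0 < Real.sqrt 2 := Real.sqrt_pos.mpr (by norm_num)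
  have hM3 : M ^ 3 * t ^ (3 * δ / 2 - 1) = 2 * Real.sqrt 2 * t ^ 2 := by
    rw [hMval, mul_pow, ← Real.rpow_natCast (t ^ (((2:ℝ) - δ) / 2)) 3,
      ← Real.rpow_mul ht0.le, mul_assoc, ← Real.rpow_add ht0]
    have he : ((2:ℝ) - δ) / 2 * ((3:ℕ):ℝ) + (3 * δ / 2 - 1) = ((2:ℕ):ℝ) := by
      push_cast; ring
    rw [he, Real.rpow_natCast, pow_succ, hsqrt2]
  -- value of |Δ|
  have hΔval : |Δ| = 4 * π ^ 2 * y ^ 2 * |n₁ * n₂ - n₃ * n₄| := by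
    have hΔeq : Δ = (4 * π ^ 2 * y ^ 2) * (n₁ * n₂ - n₃ * n₄) := by
      rw [hΔd, ha₁d, ha₂d, ha₃d, ha₄d]; ring
    rw [hΔeq, abs_mul, abs_of_pos (by positivity : (0:ℝ) < 4 * π ^ 2 * y ^ 2)]
  set R := y ^ 2 * |n₁ * n₂ - n₃ * n₄| * t ^ (3 * δ / 2 - 1) with hRd
  have hfirst : |X| ≥ R := by
    have hM3pos : 0 < 8 * M ^ 3 := by positivity
    rw [ge_iff_le, ← mul_le_mul_iff_of_pos_right hM3pos]
    have hfac : (0:ℝ) ≤ 16 * (y ^ 2 * |n₁ * n₂ - n₃ * n₄|) * t ^ 2 := by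
      positivity
    calc R * (8 * M ^ 3)
        = 8 * (y ^ 2 * |n₁ * n₂ - n₃ * n₄|) * (M ^ 3 * t ^ (3 * δ / 2 - 1)) := by
          rw [hRd]; ring
      _ = Real.sqrt 2 * (16 * (y ^ 2 * |n₁ * n₂ - n₃ * n₄|) * t ^ 2) := by
          rw [hM3]; ring
      _ ≤ π ^ 2 * (16 * (y ^ 2 * |n₁ * n₂ - n₃ * n₄|) * t ^ 2) :=
          mul_le_mul_of_nonneg_right sqrt2_le_pi_sq hfac
      _ = 4 * (4 * π ^ 2 * y ^ 2 * |n₁ * n₂ - n₃ * n₄|) * t ^ 2 := by ring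
      _ = 4 * |Δ| * t ^ 2 := by rw [hΔval]
      _ ≤ |X| * (8 * M ^ 3) := hmain
  refine ⟨hfirst, ?_⟩
  rw [abs_div, abs_neg, abs_of_pos hy, ge_iff_le, le_div_iff₀ hy]
  calc y * |n₁ * n₂ - n₃ * n₄| * t ^ (3 * δ / 2 - 1) * y = R := by rw [hRd]; ring
    _ ≤ |X| := hfirst
end

section
/- Define H(ξ) = arcosh(1/ξ) − √(1−ξ²) for 0 < ξ ≤ 1, where arcosh x = log(x + √(x²−1)). Then for every real t ≥ 1, all real 0 < y₁ ≤ y₂, and every real n > 0 with 2πny₂ ≤ t/2, one has |∫_{y₁}^{y₂} sin(2t·H(2πny/t)) dy| ≤ 4·y₂/t. -/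
open Real intervalIntegral

/-- The phase function `H(ξ) = arcosh(1/ξ) - √(1-ξ²)`, where
`arcosh x = log (x + √(x²-1))`. -/
noncomputable def phaseH (ξ : ℝ) : ℝ :=
  Real.log (1 / ξ + Real.sqrt ((1 / ξ) ^ 2 - 1)) - Real.sqrt (1 - ξ ^ 2)

noncomputable def sFun (t c y : ℝ) : ℝ := Real.sqrt (t ^ 2 - c ^ 2 * y ^ 2)

noncomputable def GFun (t c y : ℝ) : ℝ :=
  2 * t * Real.log (t + sFun t c y) - 2 * t * Real.log (c * y) - 2 * sFun t c y

noncomputable def uFun (t c y : ℝ) : ℝ := y / (2 * sFun t c y)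

lemma sFun_ge (t c y : ℝ) (ht : 0 < t) (hcy : c * y ≤ t / 2) (hcy0 : 0 ≤ c * y) :
    t / 2 ≤ sFun t c y := by
  have h2 : (t / 2) ^ 2 ≤ t ^ 2 - c ^ 2 * y ^ 2 := by nlinarith
  calc t / 2 = Real.sqrt ((t / 2) ^ 2) := by rw [Real.sqrt_sq (by positivity)]
    _ ≤ sFun t c y := Real.sqrt_le_sqrt h2

lemma sFun_sq (t c y : ℝ) (ht : 0 < t) (hcy : c * y ≤ t / 2) (hcy0 : 0 ≤ c * y) :
    (sFun t c y) ^ 2 = t ^ 2 - c ^ 2 * y ^ 2 := by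
  apply Real.sq_sqrt; nlinarith

lemma sFun_pos (t c y : ℝ) (ht : 0 < t) (hcy : c * y ≤ t / 2) (hcy0 : 0 ≤ c * y) :
    0 < sFun t c y := lt_of_lt_of_le (half_pos ht) (sFun_ge t c y ht hcy hcy0)

lemma hasDerivAt_sFun (t c y : ℝ) (ht : 0 < t) (hcy : c * y ≤ t / 2) (hcy0 : 0 ≤ c * y) :
    HasDerivAt (sFun t c) (-(c ^ 2 * y) / sFun t c y) y := by
  have hs0 : (0:ℝ) < sFun t c y := sFun_pos t c y ht hcy hcy0
  have harg : t ^ 2 - c ^ 2 * y ^ 2 ≠ 0 := by nlinarith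
  have h1 : HasDerivAt (fun y : ℝ => t ^ 2 - c ^ 2 * y ^ 2) (-(c ^ 2 * (2 * y ^ 1))) y := by
    simpa using ((hasDerivAt_pow 2 y).const_mul (c ^ 2)).const_sub (t ^ 2)
  have h2 := h1.sqrt harg
  refine h2.congr_deriv ?_
  simp only [sFun] at hs0 ⊢
  field_simp

lemma hasDerivAt_GFun (t c y : ℝ) (ht : 0 < t) (hc : 0 < c) (hy : 0 < y)
    (hcy : c * y ≤ t / 2) :
    HasDerivAt (GFun t c) (-2 * sFun t c y / y) y := by
  have hcy0 : 0 ≤ c * y := by positivity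
  have hs0 : (0:ℝ) < sFun t c y := sFun_pos t c y ht hcy hcy0
  have hds := hasDerivAt_sFun t c y ht hcy hcy0
  have hts : (0:ℝ) < t + sFun t c y := by linarith
  have h1 : HasDerivAt (fun y => Real.log (t + sFun t c y))
      ((-(c ^ 2 * y) / sFun t c y) / (t + sFun t c y)) y :=
    (hds.const_add t).log (ne_of_gt hts)
  have h2 : HasDerivAt (fun y : ℝ => Real.log (c * y)) (c * 1 / (c * y)) y :=
    ((hasDerivAt_id y).const_mul c).log (by positivity)
  have h3 := ((h1.const_mul (2 * t)).sub (h2.const_mul (2 * t))).sub (hds.const_mul 2)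
  refine h3.congr_deriv ?_
  have hsq := sFun_sq t c y ht hcy hcy0
  field_simp
  linear_combination (sFun t c y) * hsq

lemma hasDerivAt_uFun (t c y : ℝ) (ht : 0 < t) (hc : 0 < c) (hy : 0 < y)
    (hcy : c * y ≤ t / 2) :
    HasDerivAt (uFun t c) (t ^ 2 / (2 * (sFun t c y) ^ 3)) y := by
  have hcy0 : 0 ≤ c * y := by positivity
  have hs0 : (0:ℝ) < sFun t c y := sFun_pos t c y ht hcy hcy0
  have hds := hasDerivAt_sFun t c y ht hcy hcy0
  have h1 := (hasDerivAt_id y).div (hds.const_mul 2) (by positivity)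
  refine h1.congr_deriv ?_
  have hsq := sFun_sq t c y ht hcy hcy0
  simp only [id_eq]
  field_simp
  linear_combination hsq

lemma phase_eq (t c y : ℝ) (ht : 0 < t) (hc : 0 < c) (hy : 0 < y)
    (hcy : c * y ≤ t / 2) :
    2 * t * phaseH (c * y / t) = GFun t c y := by
  have hcy0 : 0 < c * y := by positivity
  have hξ : 0 < c * y / t := by positivity
  have hξ1 : c * y / t ≤ 1 / 2 := by rw [div_le_div_iff₀ ht (by norm_num)]; linarith
  set ξ := c * y / t with hξdef
  have hξ2 : (0:ℝ) ≤ 1 - ξ ^ 2 := by nlinarith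
  have hs0 : (0:ℝ) < sFun t c y := sFun_pos t c y ht hcy hcy0.le
  have hsqrt1 : Real.sqrt ((1 / ξ) ^ 2 - 1) = Real.sqrt (1 - ξ ^ 2) / ξ := by
    rw [show (1 / ξ) ^ 2 - 1 = (1 - ξ ^ 2) / ξ ^ 2 by field_simp,
      Real.sqrt_div hξ2, Real.sqrt_sq hξ.le]
  have hsqrt2 : Real.sqrt (1 - ξ ^ 2) = sFun t c y / t := by
    have hpos : (0:ℝ) ≤ t ^ 2 - c ^ 2 * y ^ 2 := by nlinarith
    rw [show (1:ℝ) - ξ ^ 2 = (t ^ 2 - c ^ 2 * y ^ 2) / t ^ 2 by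
      rw [hξdef]; field_simp,
      Real.sqrt_div hpos, Real.sqrt_sq ht.le]
    simp [sFun]
  have hlog : Real.log (1 / ξ + Real.sqrt ((1 / ξ) ^ 2 - 1)) =
      Real.log (t + sFun t c y) - Real.log (c * y) := by
    rw [hsqrt1, hsqrt2]
    have : 1 / ξ + sFun t c y / t / ξ = (t + sFun t c y) / (c * y) := by
      rw [hξdef]; field_simp
    rw [this, Real.log_div (by positivity) (by positivity)]
  simp only [phaseH, GFun, hlog, hsqrt2]
  field_simp

/-- Oscillatory-integral estimate: for `t ≥ 1`, `0 < y₁ ≤ y₂` and `n > 0` with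
`2πny₂ ≤ t/2`, one has `|∫_{y₁}^{y₂} sin(2t·H(2πny/t)) dy| ≤ 4y₂/t`. -/
theorem oscillatory_phase_integral_bound
    (t n y₁ y₂ : ℝ) (ht : 1 ≤ t) (hy₁ : 0 < y₁) (hy₁₂ : y₁ ≤ y₂)
    (hn : 0 < n) (hrange : 2 * π * n * y₂ ≤ t / 2) :
    |∫ y in y₁..y₂, Real.sin (2 * t * phaseH (2 * π * n * y / t))| ≤
      4 * y₂ / t := by
  have hπ := Real.pi_pos
  set c := 2 * π * n with hcdef
  have hc : 0 < c := by positivity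
  have ht0 : 0 < t := lt_of_lt_of_le one_pos ht
  have hy₂ : 0 < y₂ := lt_of_lt_of_le hy₁ hy₁₂
  have hmem : ∀ y ∈ Set.uIcc y₁ y₂, 0 < y ∧ c * y ≤ t / 2 := by
    intro y hy
    rw [Set.uIcc_of_le hy₁₂] at hy
    exact ⟨lt_of_lt_of_le hy₁ hy.1, by nlinarith [hy.2]⟩
  set s : ℝ → ℝ := sFun t c with hsdef
  set u' : ℝ → ℝ := fun y => t ^ 2 / (2 * (s y) ^ 3) with hu'def
  set v' : ℝ → ℝ := fun y => Real.sin (GFun t c y) * (2 * s y / y) with hv'def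
  have hscont : Continuous s := by
    rw [hsdef]; unfold sFun; fun_prop
  have hspos : ∀ y ∈ Set.uIcc y₁ y₂, 0 < s y := by
    intro y hy
    have h0 : (0:ℝ) < y := (hmem y hy).1
    exact sFun_pos t c y ht0 (hmem y hy).2 (by positivity)
  have hypos : ∀ y ∈ Set.uIcc y₁ y₂, 0 < y := fun y hy => (hmem y hy).1
  -- rewrite integrand in terms of GFun
  have hI : (∫ y in y₁..y₂, Real.sin (2 * t * phaseH (c * y / t))) =
      ∫ y in y₁..y₂, Real.sin (GFun t c y) := by
    apply intervalIntegral.integral_congr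
    intro y hy
    show Real.sin (2 * t * phaseH (c * y / t)) = Real.sin (GFun t c y)
    rw [phase_eq t c y ht0 hc (hmem y hy).1 (hmem y hy).2]
  -- derivatives
  have hu : ∀ x ∈ Set.uIcc y₁ y₂, HasDerivAt (uFun t c) (u' x) x := fun x hx =>
    hasDerivAt_uFun t c x ht0 hc (hmem x hx).1 (hmem x hx).2
  have hv : ∀ x ∈ Set.uIcc y₁ y₂,
      HasDerivAt (fun y => Real.cos (GFun t c y)) (v' x) x := by
    intro x hx
    have h := (hasDerivAt_GFun t c x ht0 hc (hmem x hx).1 (hmem x hx).2).cos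
    convert h using 1
    rw [hv'def]
    ring
  -- continuity / integrability
  have hu'cont : ContinuousOn u' (Set.uIcc y₁ y₂) := by
    apply ContinuousOn.div continuousOn_const
      ((continuous_const.mul (hscont.pow 3)).continuousOn)
    intro x hx
    have := hspos x hx
    exact (by positivity : (0:ℝ) < 2 * s x ^ 3).ne'
  have hGcont : ContinuousOn (GFun t c) (Set.uIcc y₁ y₂) := by
    unfold GFun
    apply ContinuousOn.sub
    · apply ContinuousOn.sub
      · exact continuousOn_const.mul (ContinuousOn.log
          ((continuous_const.add hscont).continuousOn)
          (fun x hx => by have := hspos x hx; positivity))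
      · exact continuousOn_const.mul (ContinuousOn.log
          ((continuous_const.mul continuous_id).continuousOn)
          (fun x hx => by have := hypos x hx; positivity))
    · exact (continuous_const.mul hscont).continuousOn
  have hv'cont : ContinuousOn v' (Set.uIcc y₁ y₂) := by
    apply ContinuousOn.mul (Real.continuous_sin.comp_continuousOn hGcont)
    exact ContinuousOn.div ((continuous_const.mul hscont).continuousOn) continuousOn_id
      (fun x hx => ne_of_gt (hypos x hx))
  have hu'int : IntervalIntegrable u' MeasureTheory.volume y₁ y₂ :=
    hu'cont.intervalIntegrable
  have hv'int : IntervalIntegrable v' MeasureTheory.volume y₁ y₂ :=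
    hv'cont.intervalIntegrable
  -- integration by parts
  have key := intervalIntegral.integral_mul_deriv_eq_deriv_mul hu hv hu'int hv'int
  have hI2 : (∫ y in y₁..y₂, Real.sin (GFun t c y)) =
      ∫ y in y₁..y₂, uFun t c y * v' y := by
    apply intervalIntegral.integral_congr
    intro y hy
    have hs0 := hspos y hy
    have hy0 := hypos y hy
    rw [hv'def]
    simp only [uFun, ← hsdef]
    field_simp
  -- fundamental theorem for u'
  have hFTC : (∫ y in y₁..y₂, u' y) = uFun t c y₂ - uFun t c y₁ :=
    intervalIntegral.integral_eq_sub_of_hasDerivAt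
      (fun x hx => hu x hx) hu'int
  have hmemy₂ : y₂ ∈ Set.uIcc y₁ y₂ := Set.right_mem_uIcc
  have hmemy₁ : y₁ ∈ Set.uIcc y₁ y₂ := Set.left_mem_uIcc
  -- bound the remainder integral
  have hrem : |∫ y in y₁..y₂, u' y * Real.cos (GFun t c y)| ≤
      uFun t c y₂ - uFun t c y₁ := by
    rw [← hFTC]
    calc |∫ y in y₁..y₂, u' y * Real.cos (GFun t c y)|
        ≤ ∫ y in y₁..y₂, |u' y * Real.cos (GFun t c y)| :=
          intervalIntegral.abs_integral_le_integral_abs hy₁₂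
      _ ≤ ∫ y in y₁..y₂, u' y := by
          apply intervalIntegral.integral_mono_on hy₁₂
          · exact ((hu'cont.mul (Real.continuous_cos.comp_continuousOn hGcont)).abs).intervalIntegrable
          · exact hu'int
          · intro x hx
            have hx' : x ∈ Set.uIcc y₁ y₂ := by
              rw [Set.uIcc_of_le hy₁₂]; exact hx
            have hs0 := hspos x hx'
            have hu'0 : 0 ≤ u' x := by rw [hu'def]; positivity
            calc |u' x * Real.cos (GFun t c x)| = u' x * |Real.cos (GFun t c x)| := by
                  rw [abs_mul, abs_of_nonneg hu'0]
              _ ≤ u' x * 1 :=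
                  mul_le_mul_of_nonneg_left (Real.abs_cos_le_one _) hu'0
              _ = u' x := mul_one _
  -- bounds on uFun
  have huB : ∀ y ∈ Set.uIcc y₁ y₂, 0 ≤ uFun t c y ∧ uFun t c y ≤ y₂ / t := by
    intro y hy
    have hs0 := hspos y hy
    have hy0 := hypos y hy
    have hsge : t / 2 ≤ s y := by
      rw [hsdef]
      exact sFun_ge t c y ht0 (hmem y hy).2 (by positivity)
    have hyle : y ≤ y₂ := by
      rw [Set.uIcc_of_le hy₁₂] at hy; exact hy.2
    constructor
    · simp only [uFun, ← hsdef]; positivity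
    · simp only [uFun, ← hsdef]
      rw [div_le_div_iff₀ (by positivity) ht0]
      nlinarith
  -- put it together
  rw [hI, hI2, key]
  have h₂ := huB y₂ hmemy₂
  have h₁ := huB y₁ hmemy₁
  have hb2 : |uFun t c y₂ * Real.cos (GFun t c y₂)| ≤ y₂ / t := by
    rw [abs_mul, abs_of_nonneg h₂.1]
    calc uFun t c y₂ * |Real.cos (GFun t c y₂)| ≤ uFun t c y₂ * 1 :=
          mul_le_mul_of_nonneg_left (Real.abs_cos_le_one _) h₂.1
      _ ≤ y₂ / t := by simpa using h₂.2
  have hb1 : |uFun t c y₁ * Real.cos (GFun t c y₁)| ≤ y₂ / t := by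
    rw [abs_mul, abs_of_nonneg h₁.1]
    calc uFun t c y₁ * |Real.cos (GFun t c y₁)| ≤ uFun t c y₁ * 1 :=
          mul_le_mul_of_nonneg_left (Real.abs_cos_le_one _) h₁.1
      _ ≤ y₂ / t := by simpa using h₁.2
  have hrem2 : |∫ y in y₁..y₂, u' y * Real.cos (GFun t c y)| ≤ y₂ / t := by
    refine hrem.trans ?_
    have := h₂.2; have := h₁.1
    linarith
  calc |uFun t c y₂ * Real.cos (GFun t c y₂) - uFun t c y₁ * Real.cos (GFun t c y₁) -
        ∫ y in y₁..y₂, u' y * Real.cos (GFun t c y)|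
      ≤ |uFun t c y₂ * Real.cos (GFun t c y₂) - uFun t c y₁ * Real.cos (GFun t c y₁)| +
        |∫ y in y₁..y₂, u' y * Real.cos (GFun t c y)| := abs_sub _ _
    _ ≤ |uFun t c y₂ * Real.cos (GFun t c y₂)| + |uFun t c y₁ * Real.cos (GFun t c y₁)| +
        |∫ y in y₁..y₂, u' y * Real.cos (GFun t c y)| := by
        linarith [abs_sub (uFun t c y₂ * Real.cos (GFun t c y₂))
          (uFun t c y₁ * Real.cos (GFun t c y₁))]
    _ ≤ y₂ / t + y₂ / t + y₂ / t := by linarith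
    _ ≤ 4 * y₂ / t := by
        rw [← add_div, ← add_div, div_le_div_iff₀ ht0 ht0]
        nlinarith
end

section
/- Let t ≥ 3 be real, let 0 < ε < 1, and let m < n be positive integers such that β₀ := (t − t^{1−ε})/(2πn) > 1/2. Then ∫_{1/2}^{β₀} dy / ( √(t² − (2πmy)²) · √(t² − (2πny)²) ) ≤ (log t)/(n·t). -/
set_option maxHeartbeats 2000000

open Real intervalIntegral

lemma hasDerivAt_G (N t d : ℝ) (hN : 0 < N) (ht : 0 < t) (hd : 0 < d)
    (y : ℝ) (hw : 0 < t - 2 * π * N * y) :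
    HasDerivAt (fun y => -(Real.arsinh (Real.sqrt (t * (t - 2 * π * N * y) / d))) / (π * N * t))
      (1 / Real.sqrt ((t * (t - 2 * π * N * y)) * (t * (t - 2 * π * N * y) + d))) y := by
  have hπ := Real.pi_pos
  set w : ℝ := t * (t - 2 * π * N * y) with hw_def
  have hw0 : 0 < w := by positivity
  have h1 : HasDerivAt (fun y : ℝ => t * (t - 2 * π * N * y) / d) (t * (-(2 * π * N)) / d) y := by
    have : HasDerivAt (fun y : ℝ => t - 2 * π * N * y) (-(2 * π * N)) y := by
      simpa using ((hasDerivAt_id y).const_mul (2 * π * N)).const_sub t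
    exact (this.const_mul t).div_const d
  have hne : t * (t - 2 * π * N * y) / d ≠ 0 := by positivity
  have h2 := h1.sqrt hne
  have h3 := h2.arsinh
  have h4 := (h3.neg).div_const (π * N * t)
  convert h4 using 1
  case e'_4 => rfl
  case e'_5 => rfl
  case e'_8 => rfl
  have hx2 : Real.sqrt (t * (t - 2 * π * N * y) / d) ^ 2 = w / d :=
    Real.sq_sqrt (by positivity)
  rw [hx2]
  have hA : (0:ℝ) < Real.sqrt (w / d) := Real.sqrt_pos.mpr (by positivity)
  have hB : (0:ℝ) < Real.sqrt (1 + w / d) := Real.sqrt_pos.mpr (by positivity)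
  have hS : (0:ℝ) < Real.sqrt (w * (w + d)) := Real.sqrt_pos.mpr (by positivity)
  have hsq : Real.sqrt (w / d) * Real.sqrt (1 + w / d) = Real.sqrt (w * (w + d)) / d := by
    rw [← Real.sqrt_mul (by positivity), show w / d * (1 + w / d) = (w * (w + d)) / d ^ 2 by
      field_simp; ring, Real.sqrt_div (by positivity), Real.sqrt_sq hd.le]
  rw [smul_eq_mul] at *
  set A := Real.sqrt (w / d) with hA_def
  set B := Real.sqrt (1 + w / d) with hB_def
  set S := Real.sqrt (w * (w + d)) with hS_def
  have hπNt : π * N * t ≠ 0 := by positivity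
  field_simp
  have : A * B * d = S := by rw [hsq]; field_simp
  linear_combination this

lemma integral_G (N t d α β : ℝ) (hN : 0 < N) (ht : 0 < t) (hd : 0 < d) (hαβ : α ≤ β)
    (hw : ∀ y ∈ Set.Icc α β, 0 < t - 2 * π * N * y) :
    ∫ y in α..β, 1 / Real.sqrt ((t * (t - 2 * π * N * y)) * (t * (t - 2 * π * N * y) + d)) =
      (Real.arsinh (Real.sqrt (t * (t - 2 * π * N * α) / d))
        - Real.arsinh (Real.sqrt (t * (t - 2 * π * N * β) / d))) / (π * N * t) := by
  have huIcc : Set.uIcc α β = Set.Icc α β := Set.uIcc_of_le hαβ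
  have hint : IntervalIntegrable
      (fun y => 1 / Real.sqrt ((t * (t - 2 * π * N * y)) * (t * (t - 2 * π * N * y) + d)))
      MeasureTheory.volume α β := by
    apply ContinuousOn.intervalIntegrable
    rw [huIcc]
    apply ContinuousOn.div continuousOn_const
    · exact (Continuous.sqrt (by continuity)).continuousOn
    · intro y hy
      have := hw y hy
      exact ne_of_gt (Real.sqrt_pos.mpr (by positivity))
  have h := intervalIntegral.integral_eq_sub_of_hasDerivAt
    (f := fun y => -(Real.arsinh (Real.sqrt (t * (t - 2 * π * N * y) / d))) / (π * N * t))
    (f' := fun y => 1 / Real.sqrt ((t * (t - 2 * π * N * y)) * (t * (t - 2 * π * N * y) + d)))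
    (fun y hy => hasDerivAt_G N t d hN ht hd y (hw y (huIcc ▸ hy))) hint
  rw [h]; ring

/-- Diagonal-term estimate `I(m,n) ≤ (log t)/(n t)` for the fourth moment of
a Maass form. -/
theorem diagonal_term_estimate
    (t ε : ℝ) (m n : ℕ) (ht : 3 ≤ t) (hε0 : 0 < ε) (hε1 : ε < 1)
    (hm : 0 < m) (hmn : m < n)
    (hβ : 1 / 2 < (t - t ^ (1 - ε)) / (2 * π * n)) :
    ∫ y in (1 / 2 : ℝ)..((t - t ^ (1 - ε)) / (2 * π * n)),
        1 / (Real.sqrt (t ^ 2 - (2 * π * m * y) ^ 2) *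
              Real.sqrt (t ^ 2 - (2 * π * n * y) ^ 2)) ≤
      Real.log t / (n * t) := by
  have hπ : 0 < π := Real.pi_pos
  have hπ3 : 3 < π := Real.pi_gt_three
  have ht0 : 0 < t := by linarith
  set N : ℝ := (n : ℝ) with hN_def
  set M : ℝ := (m : ℝ) with hM_def
  have hM1 : (1:ℝ) ≤ M := by rw [hM_def]; exact_mod_cast hm
  have hMN : M + 1 ≤ N := by rw [hM_def, hN_def]; exact_mod_cast hmn
  have hN0 : 0 < N := by linarith
  set T : ℝ := t ^ (1 - ε) with hT_def
  have hT0 : 0 < T := Real.rpow_pos_of_pos ht0 _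
  set β : ℝ := (t - T) / (2 * π * N) with hβ_def
  have hβ2 : (1:ℝ)/2 < β := hβ
  have hβmul : 2 * π * N * β = t - T := by
    rw [hβ_def]; field_simp
  have hπNt : π * N < t - T := by
    have h2 : 0 < 2 * π * N := by positivity
    have := (lt_div_iff₀ h2).mp hβ2
    linarith
  set d : ℝ := π^2 * (N^2 - M^2) with hd_def
  have hNM2 : 0 < N^2 - M^2 := by nlinarith
  have hd0 : 0 < d := by rw [hd_def]; exact mul_pos (by positivity) hNM2
  have hNM3 : (2:ℝ) ≤ N^2 - M^2 := by
    nlinarith [mul_le_mul hMN hMN (by linarith : (0:ℝ) ≤ M + 1) (by linarith : (0:ℝ) ≤ N)]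
  have hd2 : 2 * π^2 ≤ d := by
    rw [hd_def]; nlinarith [mul_le_mul_of_nonneg_left hNM3 (sq_nonneg π)]
  have hwpos : ∀ y ∈ Set.Icc (1/2 : ℝ) β, 0 < t - 2 * π * N * y := by
    intro y hy
    have h1 : 2 * π * N * y ≤ 2 * π * N * β :=
      mul_le_mul_of_nonneg_left hy.2 (by positivity)
    rw [hβmul] at h1; linarith
  have hBpos : ∀ y ∈ Set.Icc (1/2 : ℝ) β, 0 < t^2 - (2 * π * N * y)^2 := by
    intro y hy
    have h1 := hwpos y hy
    have hy0 : (0:ℝ) < y := lt_of_lt_of_le (by norm_num) hy.1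
    have h2 : (0:ℝ) < 2 * π * N * y := by positivity
    nlinarith [mul_pos h1 (show (0:ℝ) < t + 2 * π * N * y by linarith)]
  have hApos : ∀ y ∈ Set.Icc (1/2 : ℝ) β, 0 < t^2 - (2 * π * M * y)^2 := by
    intro y hy
    have h1 := hBpos y hy
    have hy0 : (0:ℝ) < y := lt_of_lt_of_le (by norm_num) hy.1
    have hMNy : 2 * π * M * y ≤ 2 * π * N * y := by
      nlinarith [mul_le_mul_of_nonneg_right (show M ≤ N by linarith)
        (show (0:ℝ) ≤ 2 * π * y by positivity)]
    have h2 : (2 * π * M * y)^2 ≤ (2 * π * N * y)^2 :=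
      pow_le_pow_left₀ (by positivity) hMNy 2
    linarith
  have hpt : ∀ y ∈ Set.Icc (1/2 : ℝ) β,
      1 / (Real.sqrt (t^2 - (2 * π * M * y)^2) * Real.sqrt (t^2 - (2 * π * N * y)^2)) ≤
      1 / Real.sqrt ((t * (t - 2 * π * N * y)) * (t * (t - 2 * π * N * y) + d)) := by
    intro y hy
    have hy1 : (1:ℝ)/2 ≤ y := hy.1
    have hy0 : (0:ℝ) < y := by linarith
    have hwy : 0 < t - 2 * π * N * y := hwpos y hy
    set w : ℝ := t * (t - 2 * π * N * y) with hw_def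
    have hw0 : 0 < w := by rw [hw_def]; positivity
    have hB : w ≤ t^2 - (2 * π * N * y)^2 := by
      rw [hw_def]
      nlinarith [mul_nonneg hwy.le (by positivity : (0:ℝ) ≤ 2 * π * N * y)]
    have hA : w + d ≤ t^2 - (2 * π * M * y)^2 := by
      have hy2 : (1:ℝ)/4 ≤ y^2 := by nlinarith
      rw [hw_def, hd_def]
      nlinarith [mul_le_mul_of_nonneg_left hy2
        (by positivity : (0:ℝ) ≤ 4 * π^2 * (N^2 - M^2)), hB]
    have hprod : Real.sqrt (w * (w + d)) ≤
        Real.sqrt (t^2 - (2 * π * M * y)^2) * Real.sqrt (t^2 - (2 * π * N * y)^2) := by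
      rw [Real.sqrt_mul hw0.le, mul_comm]
      exact mul_le_mul (Real.sqrt_le_sqrt hA) (Real.sqrt_le_sqrt hB)
        (Real.sqrt_nonneg _) (Real.sqrt_nonneg _)
    exact one_div_le_one_div_of_le (Real.sqrt_pos.mpr (by positivity)) hprod
  have hf_int : IntervalIntegrable
      (fun y => 1 / (Real.sqrt (t^2 - (2 * π * M * y)^2) * Real.sqrt (t^2 - (2 * π * N * y)^2)))
      MeasureTheory.volume (1/2) β := by
    apply ContinuousOn.intervalIntegrable
    rw [Set.uIcc_of_le hβ2.le]
    apply ContinuousOn.div continuousOn_const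
    · exact ((Continuous.sqrt (by continuity)).mul (Continuous.sqrt (by continuity))).continuousOn
    · intro y hy
      exact ne_of_gt (mul_pos (Real.sqrt_pos.mpr (hApos y hy)) (Real.sqrt_pos.mpr (hBpos y hy)))
  have hg_int : IntervalIntegrable
      (fun y => 1 / Real.sqrt ((t * (t - 2 * π * N * y)) * (t * (t - 2 * π * N * y) + d)))
      MeasureTheory.volume (1/2) β := by
    apply ContinuousOn.intervalIntegrable
    rw [Set.uIcc_of_le hβ2.le]
    apply ContinuousOn.div continuousOn_const
    · exact (Continuous.sqrt (by continuity)).continuousOn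
    · intro y hy
      have := hwpos y hy
      exact ne_of_gt (Real.sqrt_pos.mpr (by positivity))
  have hmono := intervalIntegral.integral_mono_on hβ2.le hf_int hg_int hpt
  have key := integral_G N t d (1/2) β hN0 ht0 hd0 hβ2.le hwpos
  rw [key] at hmono
  refine le_trans hmono ?_
  have hlog : 0 ≤ Real.log t := Real.log_nonneg (by linarith)
  have hX2 : 0 ≤ Real.arsinh (Real.sqrt (t * (t - 2 * π * N * β) / d)) :=
    Real.arsinh_nonneg_iff.mpr (Real.sqrt_nonneg _)
  have harsinh : Real.arsinh (Real.sqrt (t * (t - 2 * π * N * (1/2)) / d)) ≤ Real.log t := by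
    have hw12 : 0 < t - 2 * π * N * (1/2) := by nlinarith
    set x : ℝ := Real.sqrt (t * (t - 2 * π * N * (1/2)) / d) with hx_def
    have hx0 : 0 ≤ x := Real.sqrt_nonneg _
    have hxsq : x^2 = t * (t - 2 * π * N * (1/2)) / d := by
      rw [hx_def]
      exact Real.sq_sqrt (div_nonneg (mul_nonneg ht0.le hw12.le) hd0.le)
    have hxd : x^2 * d = t * (t - 2 * π * N * (1/2)) := by
      rw [hxsq]; field_simp
    have hs := Real.sq_sqrt (show (0:ℝ) ≤ 1 + x^2 by positivity)
    have hsn := Real.sqrt_nonneg (1 + x^2)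
    have hxle : x ≤ Real.sqrt (1 + x^2) := by nlinarith
    have hup : 1 + x^2 ≤ (t/2)^2 := by
      have h4 : x^2 * (2 * π^2) ≤ x^2 * d :=
        mul_le_mul_of_nonneg_left hd2 (sq_nonneg x)
      have h5 : x^2 * d ≤ t * t := by
        rw [hxd]
        nlinarith [mul_nonneg ht0.le (mul_nonneg hπ.le hN0.le)]
      have h6 : 18 * x^2 ≤ t * t := by
        nlinarith [mul_nonneg (show (0:ℝ) ≤ 2 * π^2 - 18 by nlinarith) (sq_nonneg x)]
      nlinarith [h6, sq_nonneg t]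
    have h2s : Real.sqrt (1 + x^2) ≤ t/2 :=
      le_trans (Real.sqrt_le_sqrt hup) (le_of_eq (Real.sqrt_sq (by linarith)))
    have hpos : 0 < x + Real.sqrt (1 + x^2) := by nlinarith
    rw [Real.arsinh]
    exact (Real.log_le_log_iff hpos ht0).mpr (by linarith)
  calc (Real.arsinh (Real.sqrt (t * (t - 2 * π * N * (1/2)) / d))
        - Real.arsinh (Real.sqrt (t * (t - 2 * π * N * β) / d))) / (π * N * t)
      ≤ Real.log t / (π * N * t) :=
        div_le_div₀ hlog (by linarith) (by positivity) le_rfl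
    _ ≤ Real.log t / (N * t) :=
        div_le_div₀ hlog le_rfl (by positivity) (by nlinarith [mul_pos hN0 ht0])
end

section
/- There is an absolute constant T₀ > 0 such that for every real t ≥ T₀, every real y ≥ 1/2, and every function λ : {1,2,…} → ℝ with |λ(n)| ≤ n^{1/4} for all n, one has Σ_{n > t} |λ(n)| · e^{πt/2} · |K_{it}(2πny)| ≤ e^{−t}. -/
open Real MeasureTheory

/-- The MacDonald (modified) Bessel function of imaginary order:
`K_{ir}(u) = ∫_0^∞ e^{-u cosh s} cos(rs) ds`. -/
noncomputable def Kbessel (r u : ℝ) : ℝ :=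
  ∫ s in Set.Ioi (0 : ℝ), Real.exp (-u * Real.cosh s) * Real.cos (r * s)

lemma aux_integral_exp_neg_mul {b : ℝ} (hb : 0 < b) :
    ∫ s in Set.Ioi (0 : ℝ), Real.exp (-b * s) = b⁻¹ := by
  have h := MeasureTheory.integral_comp_mul_left_Ioi (fun x => Real.exp (-x)) 0 hb
  simp only [mul_zero, integral_exp_neg_Ioi, neg_zero, Real.exp_zero, smul_eq_mul,
    mul_one] at h
  simpa only [neg_mul] using h

lemma aux_cosh_lb {s : ℝ} (hs : 0 ≤ s) : 31 / 32 + s / 32 ≤ Real.cosh s := by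
  have h1 := Real.one_le_cosh s
  have h2 : s ≤ Real.sinh s := Real.self_le_sinh_iff.mpr hs
  have h3 : Real.sinh s < Real.cosh s := Real.sinh_lt_cosh s
  linarith

lemma aux_Kbessel_le (r : ℝ) {u : ℝ} (hu : 0 < u) :
    |Kbessel r u| ≤ 32 / u * Real.exp (-(31 / 32) * u) := by
  set f : ℝ → ℝ := fun s => Real.exp (-u * Real.cosh s) * Real.cos (r * s) with hf
  set g : ℝ → ℝ := fun s => Real.exp (-(31 / 32) * u) * Real.exp (-(u / 32) * s) with hg
  have hb : 0 < u / 32 := by linarith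
  have hg_int : IntegrableOn g (Set.Ioi (0 : ℝ)) :=
    (exp_neg_integrableOn_Ioi 0 hb).const_mul _
  have hbound : ∀ s ∈ Set.Ioi (0 : ℝ), |f s| ≤ g s := by
    intro s hs
    have hs0 : (0 : ℝ) ≤ s := le_of_lt hs
    have hcosh := aux_cosh_lb hs0
    have h1 : |f s| ≤ Real.exp (-u * Real.cosh s) := by
      rw [hf, abs_mul, Real.abs_exp]
      calc Real.exp (-u * Real.cosh s) * |Real.cos (r * s)|
          ≤ Real.exp (-u * Real.cosh s) * 1 :=
            mul_le_mul_of_nonneg_left (Real.abs_cos_le_one _) (Real.exp_nonneg _)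
        _ = Real.exp (-u * Real.cosh s) := mul_one _
    have h2 : Real.exp (-u * Real.cosh s) ≤ g s := by
      show Real.exp (-u * Real.cosh s) ≤
        Real.exp (-(31 / 32) * u) * Real.exp (-(u / 32) * s)
      rw [← Real.exp_add]
      apply Real.exp_le_exp.mpr
      nlinarith
    linarith
  have hf_cont : Continuous f := by
    apply Continuous.mul
    · exact Real.continuous_exp.comp (continuous_const.mul Real.continuous_cosh)
    · exact Real.continuous_cos.comp (continuous_const.mul continuous_id)
  have hf_int : IntegrableOn f (Set.Ioi (0 : ℝ)) := by
    apply Integrable.mono hg_int (hf_cont.aestronglyMeasurable.restrict)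
    rw [ae_restrict_iff' measurableSet_Ioi]
    refine ae_of_all _ fun s hs => ?_
    have := hbound s hs
    have hgnn : 0 ≤ g s := by positivity
    simpa [Real.norm_eq_abs, abs_of_nonneg hgnn] using this
  have h_abs : |Kbessel r u| ≤ ∫ s in Set.Ioi (0 : ℝ), |f s| := by
    have h := MeasureTheory.norm_integral_le_integral_norm (μ := volume.restrict (Set.Ioi (0:ℝ))) f
    simp only [Real.norm_eq_abs] at h
    exact h
  have h_mono : ∫ s in Set.Ioi (0 : ℝ), |f s| ≤ ∫ s in Set.Ioi (0 : ℝ), g s := by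
    apply MeasureTheory.setIntegral_mono_on hf_int.abs hg_int measurableSet_Ioi
    exact hbound
  have h_val : ∫ s in Set.Ioi (0 : ℝ), g s = 32 / u * Real.exp (-(31 / 32) * u) := by
    rw [hg, MeasureTheory.integral_const_mul, aux_integral_exp_neg_mul hb]
    field_simp
  linarith [h_abs, h_mono, h_val.le, h_val.ge]

set_option maxHeartbeats 1000000 in
lemma aux_term_le {t y : ℝ} (ht : 100 ≤ t) (hy : 1 / 2 ≤ y) {n : ℕ} (hn : t < (n : ℝ))
    {l : ℕ → ℝ} (hl : |l n| ≤ (n : ℝ) ^ ((1 : ℝ) / 4)) :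
    |l n| * Real.exp (π * t / 2) * |Kbessel t (2 * π * n * y)| ≤
      Real.exp (-t) / 10 * Real.exp (-(1 / 8) : ℝ) ^ n := by
  have hπ : 3.141592 < π := pi_gt_d6
  have hπ' : π < 3.15 := pi_lt_d2
  have hn100 : (100 : ℕ) < n := by exact_mod_cast lt_of_le_of_lt ht hn
  have hn1 : (101 : ℝ) ≤ (n : ℝ) := by exact_mod_cast hn100
  have hy0 : (0 : ℝ) < y := by linarith
  have hn0 : (0 : ℝ) < (n : ℝ) := by linarith
  set u : ℝ := 2 * π * n * y with hu_def
  have hu : 0 < u := by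
    rw [hu_def]
    exact mul_pos (mul_pos (mul_pos two_pos pi_pos) hn0) hy0
  have hun : π * n ≤ u := by
    rw [hu_def]
    nlinarith [mul_nonneg (mul_nonneg pi_pos.le hn0.le) (by linarith : (0:ℝ) ≤ 2 * y - 1)]
  have hK : |Kbessel t u| ≤ 32 / u * Real.exp (-(31 / 32) * u) := aux_Kbessel_le t hu
  have h14 : (n : ℝ) ^ ((1 : ℝ) / 4) ≤ (n : ℝ) := by
    have h1n : (1 : ℝ) ≤ (n : ℝ) := by linarith
    calc (n : ℝ) ^ ((1 : ℝ) / 4) ≤ (n : ℝ) ^ (1 : ℝ) :=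
          Real.rpow_le_rpow_of_exponent_le h1n (by norm_num)
      _ = (n : ℝ) := Real.rpow_one _
  have hπn : 0 < π * (n : ℝ) := by nlinarith
  have step1 : 32 / u * Real.exp (-(31 / 32) * u) ≤
      32 / (π * n) * Real.exp (-(31 / 32) * (π * n)) := by
    have e1 : Real.exp (-(31 / 32) * u) ≤ Real.exp (-(31 / 32) * (π * n)) :=
      Real.exp_le_exp.mpr (by nlinarith [hun])
    have e2 : 32 / u ≤ 32 / (π * n) := by
      apply div_le_div_of_nonneg_left (by norm_num) hπn hun
    exact mul_le_mul e2 e1 (Real.exp_nonneg _) (by positivity)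
  have step2 : |l n| * Real.exp (π * t / 2) * |Kbessel t u| ≤
      (n : ℝ) * Real.exp (π * t / 2) * (32 / (π * n) * Real.exp (-(31 / 32) * (π * n))) := by
    have h1 : |l n| ≤ (n : ℝ) := hl.trans h14
    have h2 := hK.trans step1
    have h0 : (0 : ℝ) ≤ |l n| := abs_nonneg _
    have h3 : (0 : ℝ) ≤ |l n| * Real.exp (π * t / 2) := by positivity
    calc |l n| * Real.exp (π * t / 2) * |Kbessel t u|
        ≤ |l n| * Real.exp (π * t / 2) *
            (32 / (π * n) * Real.exp (-(31 / 32) * (π * n))) :=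
          mul_le_mul_of_nonneg_left h2 h3
      _ ≤ (n : ℝ) * Real.exp (π * t / 2) *
            (32 / (π * n) * Real.exp (-(31 / 32) * (π * n))) := by
          apply mul_le_mul_of_nonneg_right _ (by positivity)
          exact mul_le_mul_of_nonneg_right h1 (Real.exp_nonneg _)
  have hne : (n : ℝ) ≠ 0 := by positivity
  have heq : (n : ℝ) * Real.exp (π * t / 2) * (32 / (π * n) * Real.exp (-(31 / 32) * (π * n)))
      = 32 / π * (Real.exp (π * t / 2) * Real.exp (-(31 / 32) * (π * n))) := by
    field_simp
  -- the exponent gap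
  set E : ℝ := (31 / 32) * (π * n) - π * t / 2 - t - (1 / 8) * n with hE_def
  have hE34 : (34 : ℝ) ≤ E := by
    rw [hE_def]
    nlinarith [mul_le_mul_of_nonneg_left hn.le pi_pos.le,
      mul_le_mul_of_nonneg_right hπ.le hn0.le]
  have h18 : (18 : ℝ) ≤ Real.exp 17 := by
    have := Real.add_one_le_exp (17 : ℝ); linarith
  have h324 : (324 : ℝ) ≤ Real.exp 34 := by
    have he : Real.exp 34 = Real.exp 17 * Real.exp 17 := by
      rw [← Real.exp_add]; norm_num
    calc (324 : ℝ) = 18 * 18 := by norm_num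
      _ ≤ Real.exp 17 * Real.exp 17 :=
        mul_le_mul h18 h18 (by norm_num) (Real.exp_pos _).le
      _ = Real.exp 34 := he.symm
  have hkey : 32 / π * 10 ≤ Real.exp E := by
    have h1 : 32 / π * 10 ≤ 320 / 3 := by
      rw [div_mul_eq_mul_div, show (32 : ℝ) * 10 = 320 by norm_num]
      apply div_le_div_of_nonneg_left (by norm_num) (by norm_num) (by linarith)
    have h2 : Real.exp 34 ≤ Real.exp E := Real.exp_le_exp.mpr hE34
    linarith
  have hprod : Real.exp (π * t / 2) * Real.exp (-(31 / 32) * (π * n)) * Real.exp E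
      = Real.exp (-t) * Real.exp (-(1 / 8) * n) := by
    rw [← Real.exp_add, ← Real.exp_add, ← Real.exp_add]
    congr 1
    rw [hE_def]; ring
  have hfin : 32 / π * (Real.exp (π * t / 2) * Real.exp (-(31 / 32) * (π * n))) ≤
      Real.exp (-t) / 10 * Real.exp (-(1 / 8) * n) := by
    set X : ℝ := Real.exp (π * t / 2) * Real.exp (-(31 / 32) * (π * n)) with hX
    have hX0 : 0 < X := by positivity
    have := mul_le_mul_of_nonneg_left hkey hX0.le
    rw [hprod] at this
    -- this : X * (32 / π * 10) ≤ exp (-t) * exp (-(1/8)*n)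
    nlinarith
  have hpow : Real.exp (-(1 / 8) * (n : ℝ)) = Real.exp (-(1 / 8) : ℝ) ^ n := by
    rw [← Real.exp_nat_mul]; ring_nf
  calc |l n| * Real.exp (π * t / 2) * |Kbessel t u|
      ≤ (n : ℝ) * Real.exp (π * t / 2) * (32 / (π * n) * Real.exp (-(31 / 32) * (π * n))) :=
        step2
    _ = 32 / π * (Real.exp (π * t / 2) * Real.exp (-(31 / 32) * (π * n))) := heq
    _ ≤ Real.exp (-t) / 10 * Real.exp (-(1 / 8) * n) := hfin
    _ = Real.exp (-t) / 10 * Real.exp (-(1 / 8) : ℝ) ^ n := by rw [hpow]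

/-- Truncation estimate: for `t` large, `y ≥ 1/2` and coefficients with
`|λ(n)| ≤ n^{1/4}`, the tail `Σ_{n > t} |λ(n)| e^{πt/2} |K_{it}(2πny)|` is at
most `e^{-t}`. -/
theorem truncation_tail_bound :
    ∃ T₀ : ℝ, 0 < T₀ ∧ ∀ t : ℝ, T₀ ≤ t → ∀ y : ℝ, 1 / 2 ≤ y →
      ∀ l : ℕ → ℝ, (∀ n : ℕ, 1 ≤ n → |l n| ≤ (n : ℝ) ^ ((1 : ℝ) / 4)) →
        Summable (fun n : ℕ =>
          if t < (n : ℝ) then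
            |l n| * Real.exp (π * t / 2) * |Kbessel t (2 * π * n * y)| else 0) ∧
        (∑' n : ℕ,
          if t < (n : ℝ) then
            |l n| * Real.exp (π * t / 2) * |Kbessel t (2 * π * n * y)| else 0)
          ≤ Real.exp (-t) := by
  refine ⟨100, by norm_num, fun t ht y hy l hl => ?_⟩
  set F : ℕ → ℝ := fun n =>
    if t < (n : ℝ) then
      |l n| * Real.exp (π * t / 2) * |Kbessel t (2 * π * n * y)| else 0 with hF
  set q : ℝ := Real.exp (-(1 / 8) : ℝ) with hq_def
  have hq0 : 0 ≤ q := Real.exp_nonneg _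
  have hq1 : q < 1 := by rw [hq_def, Real.exp_lt_one_iff]; norm_num
  set G : ℕ → ℝ := fun n => Real.exp (-t) / 10 * q ^ n with hG
  have hG_sum : Summable G := (summable_geometric_of_lt_one hq0 hq1).mul_left _
  have hFG : ∀ n, F n ≤ G n := by
    intro n
    rw [hF, hG]
    by_cases h : t < (n : ℝ)
    · simp only [if_pos h]
      have hn1 : 1 ≤ n := by
        by_contra hc
        push_neg at hc
        interval_cases n
        simp at h; linarith
      exact aux_term_le ht hy h (hl n hn1)
    · simp only [if_neg h]
      positivity
  have hF0 : ∀ n, 0 ≤ F n := by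
    intro n
    rw [hF]
    by_cases h : t < (n : ℝ)
    · simp only [if_pos h]; positivity
    · simp only [if_neg h]; exact le_refl 0
  have hF_sum : Summable F := Summable.of_nonneg_of_le hF0 hFG hG_sum
  refine ⟨hF_sum, ?_⟩
  have h1 : ∑' n, F n ≤ ∑' n, G n := Summable.tsum_le_tsum hFG hF_sum hG_sum
  have h2 : ∑' n, G n = Real.exp (-t) / 10 * (1 - q)⁻¹ := by
    rw [hG]
    rw [tsum_mul_left, tsum_geometric_of_lt_one hq0 hq1]
  have hq89 : q ≤ 8 / 9 := by
    rw [hq_def]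
    have h98 : (9 / 8 : ℝ) ≤ Real.exp (1 / 8) := by
      have := Real.add_one_le_exp (1 / 8 : ℝ); linarith
    rw [show (-(1 / 8) : ℝ) = -(1 / 8) by norm_num, Real.exp_neg]
    rw [inv_le_comm₀ (Real.exp_pos _) (by norm_num)]
    linarith
  have h3 : (1 - q)⁻¹ ≤ 9 := by
    rw [inv_le_comm₀ (by linarith) (by norm_num)]
    linarith
  have h4 : Real.exp (-t) / 10 * (1 - q)⁻¹ ≤ Real.exp (-t) := by
    have he := Real.exp_pos (-t)
    nlinarith
  linarith
end
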